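/- arXiv:2411.16596 — 4 statements merged into one kernel-verified Lean document; each statement's English description precedes it below -/
import Mathlib

section
/- Main list-decoding theorem for bivariate linear operator codes: Let F = F_q be a finite field of size q, 𝓛 = (L_0,…,L_{s−1}) a bivariate family of linear operators, A = ((x_0,y_0),…,(x_{n−1},y_{n−1})) a list of n points of F×F, and t, k degree parameters with tk ≤ sn. Suppose there exist bivariate families 𝓖 = (G_0,…,G_{w−1}) and 𝓣 = (T_0,…,T_{r−1}) with 𝓣 linearly-extendible, integers d1 ≥ t and d2 ≥ k with w(d1−t+1)(d2−k+1) > nr, and a natural number D such that: (1) every nonzero R ∈ F[X,Y] with deg_X R < d1 and deg_Y R < d2 satisfies 𝓣(R)(x_i,y_i) ≠ 0 for at least D indices i ∈ {0,…,n−1}; (2) the pair (𝓣,𝓖) list-composes in terms of 𝓛 at A; (3) each G_j is degree-preserving in both X and Y; (4) for every nonzero u ∈ F^w the vector u·Diag(𝓖) ∈ F^{tk} has at most ℓ zero entries. Then for every received word c = (c_0,…,c_{n−1}) ∈ (F^s)^n, the number of polynomials p ∈ F[X,Y] with deg_X p < t and deg_Y p < k such that #{i ∈ {0,…,n−1} :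 𝓛(p)(x_i,y_i) ≠ c_i} < D is at most q^ℓ. -/
open MvPolynomial

noncomputable section

/-- `deg_X p < t` and `deg_Y p < k` (with the convention `deg 0 = -∞`). -/
def DegLT (F : Type) [Field F] (t k : ℕ) (p : MvPolynomial (Fin 2) F) : Prop :=
  ∀ m ∈ p.support, m 0 < t ∧ m 1 < k

/-- A linear operator on `F[X,Y]` is degree-preserving in both `X` and `Y`. -/
def DegPres (F : Type) [Field F]
    (G : MvPolynomial (Fin 2) F →ₗ[F] MvPolynomial (Fin 2) F) : Prop :=
  ∀ p : MvPolynomial (Fin 2) F, p ≠ 0 →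
    G p ≠ 0 ∧ (G p).degreeOf 0 = p.degreeOf 0 ∧ (G p).degreeOf 1 = p.degreeOf 1

/-- A bivariate family of linear operators is linearly-extendible, witnessed by
matrices `Mx`, `My` over `F[X,Y]`. -/
def LinExt (F : Type) [Field F] (s : ℕ)
    (L : Fin s → MvPolynomial (Fin 2) F →ₗ[F] MvPolynomial (Fin 2) F)
    (Mx My : Matrix (Fin s) (Fin s) (MvPolynomial (Fin 2) F)) : Prop :=
  (∀ p, (fun i => L i (X 0 * p)) = Mx.mulVec fun i => L i p) ∧
  (∀ p, (fun i => L i (X 1 * p)) = My.mulVec fun i => L i p)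

/-- The `(j, (a,b))` entry of `Diag(𝓖)`: the coefficient of `X^a Y^b` in `G_j(X^a Y^b)`. -/
def diagEntry (F : Type) [Field F]
    (G : MvPolynomial (Fin 2) F →ₗ[F] MvPolynomial (Fin 2) F) (a b : ℕ) : F :=
  MvPolynomial.coeff (Finsupp.single 0 a + Finsupp.single 1 b) (G (X 0 ^ a * X 1 ^ b))

namespace BLOaux
variable {F : Type} [Field F]

def mexp (a b : ℕ) : Fin 2 →₀ ℕ := Finsupp.single 0 a + Finsupp.single 1 b

@[simp] lemma mexp_apply0 (a b : ℕ) : mexp a b 0 = a := by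
  simp [mexp, Finsupp.single_apply]

@[simp] lemma mexp_apply1 (a b : ℕ) : mexp a b 1 = b := by
  simp [mexp, Finsupp.single_apply]

lemma mexp_self (m : Fin 2 →₀ ℕ) : mexp (m 0) (m 1) = m := by
  ext i
  fin_cases i <;> simp [mexp, Finsupp.single_apply]

lemma mexp_inj {a b a' b' : ℕ} (h : mexp a b = mexp a' b') : a = a' ∧ b = b' := by
  constructor
  · have h0 : mexp a b 0 = mexp a' b' 0 := by rw [h]
    simpa using h0
  · have h1 : mexp a b 1 = mexp a' b' 1 := by rw [h]
    simpa using h1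

lemma X_pow_mul_eq (a b : ℕ) :
    (X 0 ^ a * X 1 ^ b : MvPolynomial (Fin 2) F) = monomial (mexp a b) 1 := by
  rw [X_pow_eq_monomial, X_pow_eq_monomial, monomial_mul, mul_one]
  rfl

lemma monomial_mexp (a b : ℕ) (cc : F) :
    (monomial (mexp a b) cc : MvPolynomial (Fin 2) F) = cc • (X 0 ^ a * X 1 ^ b) := by
  rw [X_pow_mul_eq, smul_monomial, smul_eq_mul, mul_one]

lemma diagEntry_eq {G : MvPolynomial (Fin 2) F →ₗ[F] MvPolynomial (Fin 2) F} (a b : ℕ) :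
    diagEntry F G a b = coeff (mexp a b) (G (monomial (mexp a b) 1)) := by
  rw [diagEntry, ← X_pow_mul_eq]
  rfl

lemma le_degreeOf {f : MvPolynomial (Fin 2) F} {m : Fin 2 →₀ ℕ} (h : m ∈ f.support) (i : Fin 2) :
    m i ≤ f.degreeOf i := by
  rw [degreeOf_eq_sup]
  exact Finset.le_sup (f := fun m => m i) h

lemma degreeOf_monomial_one (m : Fin 2 →₀ ℕ) (i : Fin 2) :
    (monomial m (1:F)).degreeOf i = m i := by
  classical
  rw [degreeOf_eq_sup, support_monomial]
  simp

lemma suppG {G : MvPolynomial (Fin 2) F →ₗ[F] MvPolynomial (Fin 2) F} (hdeg : DegPres F G)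
    {m'' m2 : Fin 2 →₀ ℕ} (hm2 : coeff m2 (G (monomial m'' 1)) ≠ 0) :
    m2 0 ≤ m'' 0 ∧ m2 1 ≤ m'' 1 := by
  have hmono : (monomial m'' (1:F)) ≠ 0 := by
    simp [MvPolynomial.monomial_eq_zero]
  obtain ⟨-, h0, h1⟩ := hdeg _ hmono
  have hsup : m2 ∈ (G (monomial m'' 1)).support := mem_support_iff.2 hm2
  constructor
  · have := le_degreeOf hsup 0
    rwa [h0, degreeOf_monomial_one] at this
  · have := le_degreeOf hsup 1
    rwa [h1, degreeOf_monomial_one] at this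

lemma as_smul_sum (d : MvPolynomial (Fin 2) F) :
    d = ∑ m ∈ d.support, coeff m d • monomial m (1:F) := by
  conv_lhs => rw [d.as_sum]
  refine Finset.sum_congr rfl fun m _ => ?_
  rw [smul_monomial, smul_eq_mul, mul_one]

section Tvsec
variable {r : ℕ}
  {T : Fin r → MvPolynomial (Fin 2) F →ₗ[F] MvPolynomial (Fin 2) F}
  {Mx My : Matrix (Fin r) (Fin r) (MvPolynomial (Fin 2) F)}

def Tv (T : Fin r → MvPolynomial (Fin 2) F →ₗ[F] MvPolynomial (Fin 2) F)
    (z : Fin 2 → F) (p : MvPolynomial (Fin 2) F) : Fin r → F := fun ρ => eval z (T ρ p)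

lemma Tv_smul (z : Fin 2 → F) (cc : F) (p) : Tv T z (cc • p) = cc • Tv T z p := by
  funext ρ
  show eval z (T ρ (cc • p)) = cc • (eval z (T ρ p))
  rw [map_smul, smul_eq_C_mul, map_mul, eval_C, smul_eq_mul]

lemma Tv_sum {α : Type*} (z : Fin 2 → F) (s : Finset α) (f : α → MvPolynomial (Fin 2) F) :
    Tv T z (∑ x ∈ s, f x) = ∑ x ∈ s, Tv T z (f x) := by
  funext ρ
  simp [Tv, map_sum]

lemma Tv_X0 (hext : LinExt F r T Mx My) (z : Fin 2 → F) (p) :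
    Tv T z (X 0 * p) = (Mx.map (eval z)).mulVec (Tv T z p) := by
  funext ρ
  have h := congrFun (hext.1 p) ρ
  simp only [Tv, h]
  simp [Tv, Matrix.mulVec, dotProduct, map_sum]

lemma Tv_X1 (hext : LinExt F r T Mx My) (z : Fin 2 → F) (p) :
    Tv T z (X 1 * p) = (My.map (eval z)).mulVec (Tv T z p) := by
  funext ρ
  have h := congrFun (hext.2 p) ρ
  simp only [Tv, h]
  simp [Tv, Matrix.mulVec, dotProduct, map_sum]

lemma Tv_powY (hext : LinExt F r T Mx My) (z : Fin 2 → F) :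
    ∀ (b : ℕ) (p), Tv T z (X 1 ^ b * p) = ((My.map (eval z)) ^ b).mulVec (Tv T z p) := by
  intro b
  induction b with
  | zero => intro p; simp [Matrix.one_mulVec]
  | succ b ih =>
      intro p
      rw [pow_succ', mul_assoc, Tv_X1 hext, ih, Matrix.mulVec_mulVec, ← pow_succ']

lemma Tv_pow (hext : LinExt F r T Mx My) (z : Fin 2 → F) :
    ∀ (a b : ℕ) (p), Tv T z (X 0 ^ a * (X 1 ^ b * p))
      = ((Mx.map (eval z)) ^ a * (My.map (eval z)) ^ b).mulVec (Tv T z p) := by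
  intro a
  induction a with
  | zero => intro b p; simpa using Tv_powY hext z b p
  | succ a ih =>
      intro b p
      rw [pow_succ', mul_assoc, Tv_X0 hext, ih, Matrix.mulVec_mulVec, ← mul_assoc, ← pow_succ']

lemma Tv_mono (hext : LinExt F r T Mx My) (z : Fin 2 → F) (a b : ℕ) (cc : F) (p) :
    Tv T z (monomial (mexp a b) cc * p)
      = cc • ((Mx.map (eval z)) ^ a * (My.map (eval z)) ^ b).mulVec (Tv T z p) := by
  rw [monomial_mexp, smul_mul_assoc, Tv_smul, mul_assoc, Tv_pow hext]

end Tvsec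

end BLOaux

open BLOaux in
/-- Main list-decoding theorem for bivariate linear operator codes. -/
theorem main_list_decoding_BLO
    {F : Type} [Field F] [Fintype F] {q s n t k w r d1 d2 D ℓ : ℕ}
    (hq : Fintype.card F = q)
    (L : Fin s → MvPolynomial (Fin 2) F →ₗ[F] MvPolynomial (Fin 2) F)
    (A : Fin n → F × F)
    (htk : t * k ≤ s * n)
    (G : Fin w → MvPolynomial (Fin 2) F →ₗ[F] MvPolynomial (Fin 2) F)
    (T : Fin r → MvPolynomial (Fin 2) F →ₗ[F] MvPolynomial (Fin 2) F)
    (Mx My : Matrix (Fin r) (Fin r) (MvPolynomial (Fin 2) F))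
    (hext : LinExt F r T Mx My)
    (hd1 : t ≤ d1) (hd2 : k ≤ d2)
    (hcount : n * r < w * (d1 - t + 1) * (d2 - k + 1))
    (hdist : ∀ R : MvPolynomial (Fin 2) F, R ≠ 0 → DegLT F d1 d2 R →
      D ≤ {i : Fin n | (fun j : Fin r => eval ![(A i).1, (A i).2] (T j R)) ≠ 0}.ncard)
    (hcomp : ∀ (i : Fin w) (m : Fin n), ∃ h : (Fin s → F) →ₗ[F] (Fin r → F),
      ∀ p : MvPolynomial (Fin 2) F,
        (fun j : Fin r => eval ![(A m).1, (A m).2] (T j (G i p)))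
          = h fun j : Fin s => eval ![(A m).1, (A m).2] (L j p))
    (hdegG : ∀ i : Fin w, DegPres F (G i))
    (hdiag : ∀ u : Fin w → F, u ≠ 0 →
      {ab : Fin t × Fin k |
        (∑ j, u j * diagEntry F (G j) ab.1 ab.2) = 0}.ncard ≤ ℓ)
    (c : Fin n → Fin s → F) :
    {p : MvPolynomial (Fin 2) F | DegLT F t k p ∧
      {i : Fin n |
        (fun j : Fin s => eval ![(A i).1, (A i).2] (L j p)) ≠ c i}.ncard < D}.Finite ∧
    {p : MvPolynomial (Fin 2) F | DegLT F t k p ∧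
      {i : Fin n |
        (fun j : Fin s => eval ![(A i).1, (A i).2] (L j p)) ≠ c i}.ncard < D}.ncard
      ≤ q ^ ℓ := by
  classical
  subst hq
  set d1' := d1 - t + 1 with hd1'
  set d2' := d2 - k + 1 with hd2'
  choose h hh using hcomp
  set z : Fin n → Fin 2 → F := fun i => ![(A i).1, (A i).2] with hz
  set MxE : Fin n → Matrix (Fin r) (Fin r) F := fun i => Mx.map (eval (z i)) with hMxE
  set MyE : Fin n → Matrix (Fin r) (Fin r) F := fun i => My.map (eval (z i)) with hMyE
  set W : Matrix (Fin n × Fin r) (Fin w × Fin d1' × Fin d2') F :=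
    fun x y => ((MxE x.1 ^ (y.2.1 : ℕ) * MyE x.1 ^ (y.2.2 : ℕ)).mulVec (h y.1 x.1 (c x.1))) x.2
    with hW
  -- Step 1: a nonzero interpolation vector
  obtain ⟨v, hv0, hvker⟩ : ∃ v : (Fin w × Fin d1' × Fin d2') → F, v ≠ 0 ∧ W.mulVec v = 0 := by
    have hni : ¬ Function.Injective W.mulVecLin := by
      intro hinj
      have hle := LinearMap.finrank_le_finrank_of_injective hinj
      rw [Module.finrank_fintype_fun_eq_card, Module.finrank_fintype_fun_eq_card] at hle
      simp only [Fintype.card_prod, Fintype.card_fin] at hle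
      rw [mul_assoc] at hcount
      exact absurd (lt_of_lt_of_le hcount hle) (lt_irrefl _)
    rw [Function.not_injective_iff] at hni
    obtain ⟨x, y, hxy, hne⟩ := hni
    refine ⟨x - y, sub_ne_zero_of_ne hne, ?_⟩
    rw [← Matrix.mulVecLin_apply, map_sub, hxy, sub_self]
  -- the interpolation polynomials
  set B : Fin w → MvPolynomial (Fin 2) F :=
    fun j => ∑ a : Fin d1', ∑ b : Fin d2', monomial (mexp a b) (v (j, a, b)) with hB
  have hBcoeff : ∀ (j : Fin w) (a : Fin d1') (b : Fin d2'),
      coeff (mexp (a:ℕ) (b:ℕ)) (B j) = v (j, a, b) := by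
    intro j a b
    have hcond : ∀ (a' : Fin d1') (b' : Fin d2'),
        (mexp (a':ℕ) (b':ℕ) = mexp (a:ℕ) (b:ℕ)) ↔ (a' = a ∧ b' = b) := by
      intro a' b'
      constructor
      · intro hEq
        obtain ⟨h1, h2⟩ := mexp_inj hEq
        exact ⟨Fin.ext h1, Fin.ext h2⟩
      · rintro ⟨rfl, rfl⟩; rfl
    rw [hB]
    simp only [coeff_sum, coeff_monomial, hcond]
    simp [Finset.sum_ite_eq', ite_and]
  have hBsupp : ∀ (j : Fin w) (m : Fin 2 →₀ ℕ), m ∈ (B j).support →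
      m 0 ≤ d1 - t ∧ m 1 ≤ d2 - k := by
    intro j m hm
    rw [mem_support_iff] at hm
    by_contra hc
    apply hm
    rw [hB, coeff_sum]
    refine Finset.sum_eq_zero fun a _ => ?_
    rw [coeff_sum]
    refine Finset.sum_eq_zero fun b _ => ?_
    rw [coeff_monomial, if_neg]
    intro hEq
    apply hc
    rw [← hEq]
    simp only [mexp_apply0, mexp_apply1]
    exact ⟨Nat.lt_succ_iff.1 a.isLt, Nat.lt_succ_iff.1 b.isLt⟩
  -- the fundamental evaluation identity
  have hTvE : ∀ (i : Fin n) (p : MvPolynomial (Fin 2) F),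
      Tv T (z i) (∑ j, B j * G j p)
        = ∑ j, ∑ a : Fin d1', ∑ b : Fin d2', v (j, a, b) •
            ((MxE i ^ (a:ℕ) * MyE i ^ (b:ℕ)).mulVec
              (h j i (fun σ => eval (z i) (L σ p)))) := by
    intro i p
    rw [Tv_sum]
    refine Finset.sum_congr rfl fun j _ => ?_
    have hsplit : B j * G j p
        = ∑ a : Fin d1', ∑ b : Fin d2', monomial (mexp a b) (v (j, a, b)) * G j p := by
      rw [hB]
      simp only [Finset.sum_mul]
    rw [hsplit, Tv_sum]
    refine Finset.sum_congr rfl fun a _ => ?_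
    rw [Tv_sum]
    refine Finset.sum_congr rfl fun b _ => ?_
    have hTveq : Tv T (z i) (G j p) = h j i (fun σ => eval (z i) (L σ p)) := hh j i p
    rw [Tv_mono hext, hTveq]
  -- at agreement points the evaluation vanishes
  have hkey : ∀ (i : Fin n) (p : MvPolynomial (Fin 2) F),
      (fun σ : Fin s => eval (z i) (L σ p)) = c i →
      Tv T (z i) (∑ j, B j * G j p) = 0 := by
    intro i p hag
    rw [hTvE i p, hag]
    funext ρ
    have h0 := congrFun hvker (i, ρ)
    simp only [Matrix.mulVec, dotProduct, hW, Pi.zero_apply,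
      Fintype.sum_prod_type] at h0
    simp only [Finset.sum_apply, Pi.smul_apply, smul_eq_mul, Pi.zero_apply,
      Matrix.mulVec, dotProduct]
    rw [← h0]
    exact Finset.sum_congr rfl fun j _ => Finset.sum_congr rfl fun a _ =>
      Finset.sum_congr rfl fun b _ => mul_comm _ _
  -- Step 2: every close codeword kills the interpolation polynomial
  have hEzero : ∀ p : MvPolynomial (Fin 2) F, DegLT F t k p →
      {i : Fin n | (fun j : Fin s => eval ![(A i).1, (A i).2] (L j p)) ≠ c i}.ncard < D →
      (∑ j, B j * G j p) = 0 := by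
    intro p hdeg herr
    by_contra hE0
    have hp0 : p ≠ 0 := by
      rintro rfl
      apply hE0
      simp
    have ht0 : 0 < t ∧ 0 < k := by
      have hsne : p.support.Nonempty := by
        rw [Finset.nonempty_iff_ne_empty, Ne, MvPolynomial.support_eq_empty]
        exact hp0
      obtain ⟨m₀, hm₀⟩ := hsne
      have := hdeg m₀ hm₀
      omega
    have hRdeg : DegLT F d1 d2 (∑ j, B j * G j p) := by
      intro m hm
      have hmem := MvPolynomial.support_sum hm
      obtain ⟨j, -, hmj⟩ := Finset.mem_biUnion.1 hmem
      obtain ⟨m1, hm1, m2, hm2, rfl⟩ := Finset.mem_add.1 (MvPolynomial.support_mul _ _ hmj)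
      have hb := hBsupp j m1 hm1
      have hG := hdegG j p hp0
      have h20 : m2 0 ≤ p.degreeOf 0 := by
        have := le_degreeOf hm2 0
        rwa [hG.2.1] at this
      have h21 : m2 1 ≤ p.degreeOf 1 := by
        have := le_degreeOf hm2 1
        rwa [hG.2.2] at this
      have hp0d : p.degreeOf 0 < t := by
        rw [degreeOf_lt_iff ht0.1]
        exact fun m hm => (hdeg m hm).1
      have hp1d : p.degreeOf 1 < k := by
        rw [degreeOf_lt_iff ht0.2]
        exact fun m hm => (hdeg m hm).2
      constructor
      · rw [Finsupp.add_apply]; omega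
      · rw [Finsupp.add_apply]; omega
    have hD := hdist _ hE0 hRdeg
    have hsub2 : {i : Fin n |
        (fun j : Fin r => eval ![(A i).1, (A i).2] (T j (∑ j, B j * G j p))) ≠ 0}
        ⊆ {i : Fin n | (fun j : Fin s => eval ![(A i).1, (A i).2] (L j p)) ≠ c i} := by
      intro i hi
      simp only [Set.mem_setOf_eq] at hi ⊢
      intro hag
      exact hi (hkey i p hag)
    have hmono := Set.ncard_le_ncard hsub2 (Set.toFinite _)
    omega
  -- Step 3: the diagonal argument
  have hBne : ∃ j₀ : Fin w, (B j₀).support.Nonempty := by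
    obtain ⟨y, hy⟩ := Function.ne_iff.1 hv0
    refine ⟨y.1, ⟨mexp (y.2.1:ℕ) (y.2.2:ℕ), mem_support_iff.2 ?_⟩⟩
    rw [hBcoeff]
    exact hy
  set SB : Finset (Fin 2 →₀ ℕ) := Finset.univ.biUnion (fun j => (B j).support) with hSB
  have hSBne : SB.Nonempty := by
    obtain ⟨j₀, m₀, hm₀⟩ := hBne
    exact ⟨m₀, Finset.mem_biUnion.2 ⟨j₀, Finset.mem_univ _, hm₀⟩⟩
  obtain ⟨mst, hmstSB, hmstmax⟩ :=
    SB.exists_max_image (fun m => toLex ((m 0 + m 1 : ℕ), m 0)) hSBne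
  set u : Fin w → F := fun j => coeff mst (B j) with hu
  have hu0 : u ≠ 0 := by
    obtain ⟨j, -, hj⟩ := Finset.mem_biUnion.1 hmstSB
    exact Function.ne_iff.2 ⟨j, mem_support_iff.1 hj⟩
  set Z : Set (Fin t × Fin k) :=
    {ab | (∑ j, u j * diagEntry F (G j) ab.1 ab.2) = 0} with hZ
  have hZl : Z.ncard ≤ ℓ := hdiag u hu0
  -- core cancellation lemma
  have hcore : ∀ d : MvPolynomial (Fin 2) F, DegLT F t k d → (∑ j, B j * G j d) = 0 →
      (∀ ab : Fin t × Fin k, ab ∈ Z → coeff (mexp (ab.1:ℕ) (ab.2:ℕ)) d = 0) → d = 0 := by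
    intro d hdeg hEd hZc
    by_contra hd0
    have hdsne : d.support.Nonempty := by
      rw [Finset.nonempty_iff_ne_empty, Ne, MvPolynomial.support_eq_empty]
      exact hd0
    obtain ⟨mab, hmabmem, hmabmax⟩ :=
      d.support.exists_max_image (fun m => toLex ((m 0 + m 1 : ℕ), m 0)) hdsne
    obtain ⟨hat, hbk⟩ := hdeg mab hmabmem
    have hmabd : coeff mab d ≠ 0 := mem_support_iff.1 hmabmem
    have habZ : (⟨⟨mab 0, hat⟩, ⟨mab 1, hbk⟩⟩ : Fin t × Fin k) ∉ Z := by
      intro hIn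
      apply hmabd
      have := hZc _ hIn
      rwa [show ((⟨⟨mab 0, hat⟩, ⟨mab 1, hbk⟩⟩ : Fin t × Fin k).1 : ℕ) = mab 0 from rfl,
        show ((⟨⟨mab 0, hat⟩, ⟨mab 1, hbk⟩⟩ : Fin t × Fin k).2 : ℕ) = mab 1 from rfl,
        mexp_self] at this
    -- compute the coefficient of mst + mab in the (zero) polynomial ∑ B j * G j d
    have hGd : ∀ j, G j d = ∑ m'' ∈ d.support, coeff m'' d • G j (monomial m'' 1) := by
      intro j
      conv_lhs => rw [as_smul_sum d]
      rw [map_sum]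
      exact Finset.sum_congr rfl fun m _ => by rw [map_smul]
    have hjj : ∀ j, coeff (mst + mab) (B j * G j d)
        = u j * (coeff mab d * coeff mab (G j (monomial mab 1))) := by
      intro j
      have hexpand : ∀ m2 : Fin 2 →₀ ℕ, coeff m2 (G j d)
          = ∑ m'' ∈ d.support, coeff m'' d * coeff m2 (G j (monomial m'' 1)) := by
        intro m2
        rw [hGd j, coeff_sum]
        exact Finset.sum_congr rfl fun m _ => by rw [coeff_smul, smul_eq_mul]
      have hoff2 : ∀ m'' ∈ d.support, m'' ≠ mab →
          coeff m'' d * coeff mab (G j (monomial m'' 1)) = 0 := by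
        intro m'' hm''mem hm''ne
        by_contra hne0
        have hg'' : coeff mab (G j (monomial m'' 1)) ≠ 0 :=
          fun hx => hne0 (by rw [hx, mul_zero])
        obtain ⟨hle0, hle1⟩ := suppG (hdegG j) hg''
        have hlex := hmabmax m'' hm''mem
        rw [Prod.Lex.le_iff] at hlex
        simp only [ofLex_toLex] at hlex
        apply hm''ne
        rw [← mexp_self m'', ← mexp_self mab]
        have h0 : m'' 0 = mab 0 := by
          rcases hlex with hcase | ⟨h1c, h2c⟩ <;> omega
        have h1 : m'' 1 = mab 1 := by
          rcases hlex with hcase | ⟨h1c, h2c⟩ <;> omega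
        rw [h0, h1]
      have hoffd : ∀ x ∈ Finset.HasAntidiagonal.antidiagonal (mst + mab), x ≠ (mst, mab) →
          coeff x.1 (B j) * coeff x.2 (G j d) = 0 := by
        rintro ⟨m1, m2⟩ hxmem hxne
        by_contra h0
        have hm1 : coeff m1 (B j) ≠ 0 := fun hx => h0 (by rw [hx, zero_mul])
        have hm2 : coeff m2 (G j d) ≠ 0 := fun hx => h0 (by rw [hx, mul_zero])
        rw [hexpand m2] at hm2
        obtain ⟨m'', hm''mem, hm''ne⟩ := Finset.exists_ne_zero_of_sum_ne_zero hm2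
        have hg'' : coeff m2 (G j (monomial m'' 1)) ≠ 0 :=
          fun hx => hm''ne (by rw [hx, mul_zero])
        obtain ⟨hle0, hle1⟩ := suppG (hdegG j) hg''
        have hm1SB : m1 ∈ SB := Finset.mem_biUnion.2 ⟨j, Finset.mem_univ _,
          mem_support_iff.2 hm1⟩
        have hlex1 := hmstmax m1 hm1SB
        have hlex2 := hmabmax m'' hm''mem
        rw [Prod.Lex.le_iff] at hlex1 hlex2
        simp only [ofLex_toLex] at hlex1 hlex2
        have hsum : m1 + m2 = mst + mab := Finset.HasAntidiagonal.mem_antidiagonal.1 hxmem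
        have he0 : m1 0 + m2 0 = mst 0 + mab 0 := by
          have := DFunLike.congr_fun hsum 0
          simpa [Finsupp.add_apply] using this
        have he1 : m1 1 + m2 1 = mst 1 + mab 1 := by
          have := DFunLike.congr_fun hsum 1
          simpa [Finsupp.add_apply] using this
        apply hxne
        have h10 : m1 0 = mst 0 := by
          rcases hlex1 with ha | ⟨ha1, ha2⟩ <;> rcases hlex2 with hb | ⟨hb1, hb2⟩ <;> omega
        have h11 : m1 1 = mst 1 := by
          rcases hlex1 with ha | ⟨ha1, ha2⟩ <;> rcases hlex2 with hb | ⟨hb1, hb2⟩ <;> omega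
        have h20 : m2 0 = mab 0 := by omega
        have h21 : m2 1 = mab 1 := by omega
        have hm1eq : m1 = mst := by
          rw [← mexp_self m1, ← mexp_self mst, h10, h11]
        have hm2eq : m2 = mab := by
          rw [← mexp_self m2, ← mexp_self mab, h20, h21]
        rw [Prod.mk.injEq]
        exact ⟨hm1eq, hm2eq⟩
      rw [coeff_mul, Finset.sum_eq_single_of_mem (mst, mab)
        (Finset.HasAntidiagonal.mem_antidiagonal.2 rfl) hoffd]
      rw [show ((mst, mab).1 : Fin 2 →₀ ℕ) = mst from rfl,
        show ((mst, mab).2 : Fin 2 →₀ ℕ) = mab from rfl]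
      rw [hexpand mab, Finset.sum_eq_single_of_mem mab hmabmem hoff2]
    have hcoeff : coeff (mst + mab) (∑ j, B j * G j d)
        = (∑ j, u j * diagEntry F (G j) (mab 0) (mab 1)) * coeff mab d := by
      rw [coeff_sum]
      rw [Finset.sum_congr rfl fun j _ => hjj j, Finset.sum_mul]
      refine Finset.sum_congr rfl fun j _ => ?_
      rw [diagEntry_eq, mexp_self]
      ring
    rw [hEd] at hcoeff
    simp only [coeff_zero] at hcoeff
    have hsum0 : (∑ j, u j * diagEntry F (G j) (mab 0) (mab 1)) = 0 := by
      rcases mul_eq_zero.1 hcoeff.symm with hx | hx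
      · exact hx
      · exact absurd hx hmabd
    exact habZ hsum0
  -- the restricted-coefficient map is injective on the solution set
  set S' : Set (MvPolynomial (Fin 2) F) :=
    {p | DegLT F t k p ∧ (∑ j, B j * G j p) = 0} with hS'
  set g : MvPolynomial (Fin 2) F → (Z → F) :=
    fun p zz => coeff (mexp ((zz:Fin t × Fin k).1:ℕ) ((zz:Fin t × Fin k).2:ℕ)) p with hg
  have hinj : Set.InjOn g S' := by
    intro p hp p' hp' hgeq
    have hdsub : DegLT F t k (p - p') := by
      intro m hm
      rcases Finset.mem_union.1 (MvPolynomial.support_sub _ _ _ hm) with hmm | hmm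
      · exact hp.1 m hmm
      · exact hp'.1 m hmm
    have hEd : (∑ j, B j * G j (p - p')) = 0 := by
      have : ∀ j : Fin w, B j * G j (p - p') = B j * G j p - B j * G j p' := by
        intro j
        rw [map_sub, mul_sub]
      rw [Finset.sum_congr rfl fun j _ => this j, Finset.sum_sub_distrib, hp.2, hp'.2, sub_zero]
    have hZc : ∀ ab : Fin t × Fin k, ab ∈ Z → coeff (mexp (ab.1:ℕ) (ab.2:ℕ)) (p - p') = 0 := by
      intro ab hab
      rw [coeff_sub]
      have := congrFun hgeq ⟨ab, hab⟩
      simp only [hg] at this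
      rw [this, sub_self]
    have := hcore _ hdsub hEd hZc
    exact sub_eq_zero.1 this
  have hfin' : S'.Finite := by
    have himg : (g '' S').Finite := Set.toFinite _
    exact Set.Finite.of_finite_image himg hinj
  have hcard' : S'.ncard ≤ Fintype.card F ^ ℓ := by
    have h1 : S'.ncard = (g '' S').ncard := (Set.ncard_image_of_injOn hinj).symm
    have h2 : (g '' S').ncard ≤ Nat.card (Z → F) := by
      rw [← Set.ncard_univ]
      exact Set.ncard_le_ncard (Set.subset_univ _) (Set.toFinite _)
    have h3 : Nat.card (Z → F) = Fintype.card F ^ Z.ncard := by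
      rw [Nat.card_fun, Nat.card_eq_fintype_card, Nat.card_coe_set_eq]
    have h4 : Fintype.card F ^ Z.ncard ≤ Fintype.card F ^ ℓ := by
      refine Nat.pow_le_pow_right ?_ hZl
      exact Fintype.card_pos_iff.2 ⟨0⟩
    omega
  -- final assembly
  have hSsub : {p : MvPolynomial (Fin 2) F | DegLT F t k p ∧
      {i : Fin n |
        (fun j : Fin s => eval ![(A i).1, (A i).2] (L j p)) ≠ c i}.ncard < D} ⊆ S' := by
    rintro p ⟨hdeg, herr⟩
    exact ⟨hdeg, hEzero p hdeg herr⟩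
  exact ⟨hfin'.subset hSsub, le_trans (Set.ncard_le_ncard hSsub hfin') hcard'⟩
end
end

section
/- Bound on the solution space of the functional equation: Let F = F_q be a finite field, G_0,…,G_{w−1} : F[X,Y] → F[X,Y] linear operators that are degree-preserving in both X and Y, and let t, k, ℓ be parameters such that for every nonzero u ∈ F^w the vector u·Diag(𝓖) ∈ F^{tk} has at most ℓ zero entries. Let Q_0,…,Q_{w−1} ∈ F[X,Y] be polynomials, not all zero. Then the set {p ∈ F[X,Y] : deg_X p < t, deg_Y p < k, Σ_{j=0}^{w−1} Q_j·G_j(p) = 0} is an F_q-linear subspace of dimension at most ℓ; in particular it contains at most q^ℓ polynomials. -/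
open MvPolynomial

noncomputable section

namespace SolSpaceAux

abbrev μ (a b : ℕ) : Fin 2 →₀ ℕ := Finsupp.single 0 a + Finsupp.single 1 b

lemma eq_μ (m : Fin 2 →₀ ℕ) : m = μ (m 0) (m 1) := by
  ext i; fin_cases i <;> simp [μ, Finsupp.single_apply]

def e (m : Fin 2 →₀ ℕ) : Lex (ℕ × ℕ) := toLex (m 0, m 1)

lemma e_inj : Function.Injective e := by
  intro m n h
  have h' : ((m 0, m 1) : ℕ × ℕ) = (n 0, n 1) := congrArg ofLex h
  rw [Prod.mk.injEq] at h'
  rw [eq_μ m, eq_μ n, h'.1, h'.2]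

lemma e_add (m n : Fin 2 →₀ ℕ) : e (m + n) = e m + e n := rfl

lemma e_mono {m n : Fin 2 →₀ ℕ} (h0 : m 0 ≤ n 0) (h1 : m 1 ≤ n 1) : e m ≤ e n := by
  rcases lt_or_eq_of_le h0 with h | h
  · exact le_of_lt (Prod.Lex.lt_iff.mpr (Or.inl h))
  · exact Prod.Lex.le_iff.mpr (Or.inr ⟨h, h1⟩)

/-- support of the image of a monomial under a degree preserving operator -/
lemma supp_le {F : Type} [Field F]
    {G : MvPolynomial (Fin 2) F →ₗ[F] MvPolynomial (Fin 2) F} (hG : DegPres F G)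
    (m : Fin 2 →₀ ℕ) (c : F) {n : Fin 2 →₀ ℕ}
    (hn : n ∈ (G (MvPolynomial.monomial m c)).support) : n 0 ≤ m 0 ∧ n 1 ≤ m 1 := by
  by_cases hc : c = 0
  · simp [hc] at hn
  · have hne : (MvPolynomial.monomial m c : MvPolynomial (Fin 2) F) ≠ 0 := by
      simpa [MvPolynomial.monomial_eq_zero] using hc
    obtain ⟨-, h0, h1⟩ := hG _ hne
    constructor
    · have hle : n 0 ≤ (G (MvPolynomial.monomial m c)).degreeOf 0 := by
        rw [MvPolynomial.degreeOf_eq_sup]; exact Finset.le_sup (f := fun m => m 0) hn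
      rw [h0, MvPolynomial.degreeOf_monomial_eq _ _ hc] at hle; exact hle
    · have hle : n 1 ≤ (G (MvPolynomial.monomial m c)).degreeOf 1 := by
        rw [MvPolynomial.degreeOf_eq_sup]; exact Finset.le_sup (f := fun m => m 1) hn
      rw [h1, MvPolynomial.degreeOf_monomial_eq _ _ hc] at hle; exact hle

end SolSpaceAux

open SolSpaceAux

/-- Bound on the solution space of the functional equation: the set of `p` with
`deg_X p < t`, `deg_Y p < k` and `Σ_j Q_j · G_j(p) = 0` is an `F_q`-linear subspace
of dimension at most `ℓ`, hence of size at most `q^ℓ`. -/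
theorem solution_space_bound
    {F : Type} [Field F] [Fintype F] {q w t k ℓ : ℕ}
    (hq : Fintype.card F = q)
    (G : Fin w → MvPolynomial (Fin 2) F →ₗ[F] MvPolynomial (Fin 2) F)
    (hG : ∀ i : Fin w, DegPres F (G i))
    (hdiag : ∀ u : Fin w → F, u ≠ 0 →
      {ab : Fin t × Fin k |
        (∑ j, u j * diagEntry F (G j) ab.1 ab.2) = 0}.ncard ≤ ℓ)
    (Q : Fin w → MvPolynomial (Fin 2) F) (hQ : Q ≠ 0) :
    ∃ V : Submodule F (MvPolynomial (Fin 2) F),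
      (∀ p : MvPolynomial (Fin 2) F,
        p ∈ V ↔ (DegLT F t k p ∧ (∑ j : Fin w, Q j * G j p) = 0)) ∧
      Module.rank F V ≤ (ℓ : Cardinal) ∧
      Nat.card V ≤ q ^ ℓ := by
  classical
  obtain ⟨j0, hj0⟩ := Function.ne_iff.mp hQ
  obtain ⟨m0, hm0⟩ : (Q j0).support.Nonempty :=
    Finset.nonempty_iff_ne_empty.mpr (fun h => hj0 (MvPolynomial.support_eq_empty.mp h))
  have hSne : (Finset.univ.biUnion fun j => (Q j).support).Nonempty :=
    ⟨m0, Finset.mem_biUnion.mpr ⟨j0, Finset.mem_univ _, hm0⟩⟩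
  obtain ⟨M, hMS, hMmax⟩ := Finset.exists_max_image _ e hSne
  set u : Fin w → F := fun j => MvPolynomial.coeff M (Q j) with hu_def
  have hu : u ≠ 0 := by
    obtain ⟨j1, -, hj1⟩ := Finset.mem_biUnion.mp hMS
    exact Function.ne_iff.mpr ⟨j1, by simpa [hu_def] using MvPolynomial.mem_support_iff.mp hj1⟩
  have hZcard : {ab : Fin t × Fin k |
      (∑ j, u j * diagEntry F (G j) ab.1 ab.2) = 0}.ncard ≤ ℓ := hdiag u hu
  -- key claim : solutions vanishing on the bad set are zero
  have key : ∀ p : MvPolynomial (Fin 2) F, DegLT F t k p →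
      (∑ j : Fin w, Q j * G j p) = 0 →
      (∀ ab : Fin t × Fin k, (∑ j, u j * diagEntry F (G j) ab.1 ab.2) = 0 →
        MvPolynomial.coeff (μ ab.1 ab.2) p = 0) → p = 0 := by
    intro p hdeg hsum0 hzero
    by_contra hp
    obtain ⟨A, hA, hAmax⟩ := Finset.exists_max_image p.support e
      (Finset.nonempty_iff_ne_empty.mpr (fun h => hp (MvPolynomial.support_eq_empty.mp h)))
    have hcoeffne : MvPolynomial.coeff A p ≠ 0 := MvPolynomial.mem_support_iff.mp hA
    -- support bound for G j p
    have hsuppG : ∀ j : Fin w, ∀ n ∈ (G j p).support, e n ≤ e A := by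
      intro j n hn
      rw [MvPolynomial.as_sum p, map_sum] at hn
      obtain ⟨m, hm, hn'⟩ := Finset.mem_biUnion.mp (MvPolynomial.support_sum hn)
      obtain ⟨h0, h1⟩ := supp_le (hG j) m _ hn'
      exact le_trans (e_mono h0 h1) (hAmax m hm)
    -- monomial identity
    have hmono : (MvPolynomial.monomial A (1 : F))
        = X 0 ^ (A 0) * X 1 ^ (A 1) := by
      rw [MvPolynomial.X_pow_eq_monomial, MvPolynomial.X_pow_eq_monomial,
        MvPolynomial.monomial_mul, one_mul]
      conv_lhs => rw [eq_μ A]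
    -- coefficient of A in G j p
    have hcoeffA : ∀ j : Fin w, MvPolynomial.coeff A (G j p)
        = MvPolynomial.coeff A p * diagEntry F (G j) (A 0) (A 1) := by
      intro j
      conv_lhs => rw [MvPolynomial.as_sum p, map_sum, MvPolynomial.coeff_sum]
      rw [Finset.sum_eq_single_of_mem A hA ?_]
      · have h1 : (MvPolynomial.monomial A) (MvPolynomial.coeff A p)
            = MvPolynomial.coeff A p • (MvPolynomial.monomial A (1 : F)) := by
          rw [MvPolynomial.smul_monomial, smul_eq_mul, mul_one]
        rw [h1, map_smul, MvPolynomial.coeff_smul, smul_eq_mul, hmono]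
        have : diagEntry F (G j) (A 0) (A 1)
            = MvPolynomial.coeff (μ (A 0) (A 1)) (G j (X 0 ^ (A 0) * X 1 ^ (A 1))) := rfl
        rw [this, ← eq_μ A]
      · intro m hm hne
        by_contra hc
        have hAmem : A ∈ (G j (MvPolynomial.monomial m (MvPolynomial.coeff m p))).support :=
          MvPolynomial.mem_support_iff.mpr hc
        obtain ⟨h0, h1⟩ := supp_le (hG j) m _ hAmem
        exact hne (e_inj (le_antisymm (hAmax m hm) (e_mono h0 h1)))
    -- coefficient of M + A in the product
    have hprod : ∀ j : Fin w, MvPolynomial.coeff (M + A) (Q j * G j p)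
        = u j * MvPolynomial.coeff A (G j p) := by
      intro j
      rw [MvPolynomial.coeff_mul]
      rw [Finset.sum_eq_single_of_mem (M, A) (Finset.HasAntidiagonal.mem_antidiagonal.mpr rfl) ?_]
      intro x hx hne
      by_contra hc
      have h1 : MvPolynomial.coeff x.1 (Q j) ≠ 0 := left_ne_zero_of_mul hc
      have h2 : MvPolynomial.coeff x.2 (G j p) ≠ 0 := right_ne_zero_of_mul hc
      have hm1 : e x.1 ≤ e M := hMmax x.1 (Finset.mem_biUnion.mpr
        ⟨j, Finset.mem_univ j, MvPolynomial.mem_support_iff.mpr h1⟩)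
      have hm2 : e x.2 ≤ e A := hsuppG j x.2 (MvPolynomial.mem_support_iff.mpr h2)
      have hsum : e x.1 + e x.2 = e M + e A := by
        rw [← e_add, ← e_add, Finset.HasAntidiagonal.mem_antidiagonal.mp hx]
      have he1 : e x.1 = e M := by
        by_contra h
        exact absurd hsum (ne_of_lt (add_lt_add_of_lt_of_le (lt_of_le_of_ne hm1 h) hm2))
      have he2 : e x.2 = e A := by
        have h' := hsum; rw [he1] at h'; exact add_left_cancel h'
      exact hne (Prod.ext (e_inj he1) (e_inj he2))
    -- put it together
    have h0 : MvPolynomial.coeff (M + A) (∑ j : Fin w, Q j * G j p) = 0 := by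
      rw [hsum0]; simp
    rw [MvPolynomial.coeff_sum] at h0
    simp only [hprod, hcoeffA] at h0
    have hz : (∑ j : Fin w, u j * diagEntry F (G j) (A 0) (A 1)) = 0 := by
      have hfac : (∑ j : Fin w, u j * (MvPolynomial.coeff A p * diagEntry F (G j) (A 0) (A 1)))
          = MvPolynomial.coeff A p * ∑ j : Fin w, u j * diagEntry F (G j) (A 0) (A 1) := by
        rw [Finset.mul_sum]; exact Finset.sum_congr rfl fun j _ => by ring
      rw [hfac] at h0
      exact (mul_eq_zero.mp h0).resolve_left hcoeffne
    obtain ⟨ht, hk⟩ := hdeg A hA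
    have := hzero (⟨A 0, ht⟩, ⟨A 1, hk⟩) hz
    rw [← eq_μ A] at this
    exact hcoeffne this
  -- the submodule
  let V : Submodule F (MvPolynomial (Fin 2) F) :=
    { carrier := {p | DegLT F t k p ∧ (∑ j : Fin w, Q j * G j p) = 0}
      add_mem' := by
        rintro p r ⟨hp1, hp2⟩ ⟨hr1, hr2⟩
        refine ⟨fun m hm => ?_, ?_⟩
        · rcases Finset.mem_union.mp (MvPolynomial.support_add hm) with h | h
          exacts [hp1 m h, hr1 m h]
        · simp only [map_add, mul_add, Finset.sum_add_distrib, hp2, hr2, add_zero]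
      zero_mem' := ⟨fun m hm => by simp at hm, by simp⟩
      smul_mem' := by
        rintro c p ⟨hp1, hp2⟩
        refine ⟨fun m hm => hp1 m (MvPolynomial.support_smul hm), ?_⟩
        have h : ∀ j : Fin w, Q j * G j (c • p) = c • (Q j * G j p) := by
          intro j; rw [map_smul, mul_smul_comm]
        rw [Finset.sum_congr rfl fun j _ => h j, ← Finset.smul_sum, hp2, smul_zero] }
  have hmemV : ∀ p : MvPolynomial (Fin 2) F,
      p ∈ V ↔ (DegLT F t k p ∧ (∑ j : Fin w, Q j * G j p) = 0) := fun p => Iff.rfl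
  -- the coordinate map on the bad set
  set Z : Set (Fin t × Fin k) :=
    {ab : Fin t × Fin k | (∑ j, u j * diagEntry F (G j) ab.1 ab.2) = 0} with hZdef
  haveI : Fintype Z := Fintype.ofFinite _
  let Φ : V →ₗ[F] (Z → F) :=
    { toFun := fun v z => MvPolynomial.coeff (μ z.1.1 z.1.2) v.1
      map_add' := by intro x y; funext z; simp [MvPolynomial.coeff_add]
      map_smul' := by intro c x; funext z; simp [MvPolynomial.coeff_smul] }
  have hΦ : Function.Injective Φ := by
    intro x y hxy
    have hd := (hmemV _).mp (sub_mem x.2 y.2)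
    have hz0 : ∀ ab : Fin t × Fin k, (∑ j, u j * diagEntry F (G j) ab.1 ab.2) = 0 →
        MvPolynomial.coeff (μ ab.1 ab.2)
          ((x : MvPolynomial (Fin 2) F) - (y : MvPolynomial (Fin 2) F)) = 0 := by
      intro ab hab
      have h : MvPolynomial.coeff (μ ab.1 ab.2) (x : MvPolynomial (Fin 2) F)
          = MvPolynomial.coeff (μ ab.1 ab.2) (y : MvPolynomial (Fin 2) F) :=
        congrFun hxy (⟨ab, hab⟩ : Z)
      rw [MvPolynomial.coeff_sub]
      exact sub_eq_zero.mpr h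
    exact Subtype.ext (sub_eq_zero.mp (key _ hd.1 hd.2 hz0))
  have hZle : Fintype.card Z ≤ ℓ := by
    rw [← Nat.card_eq_fintype_card, Nat.card_coe_set_eq]; exact hZcard
  refine ⟨V, hmemV, ?_, ?_⟩
  · have h1 := Φ.rank_le_of_injective hΦ
    rw [rank_fun'] at h1
    exact le_trans h1 (by exact_mod_cast hZle)
  · have h1 : Nat.card V ≤ Nat.card (Z → F) := Nat.card_le_card_of_injective Φ hΦ
    have h2 : Nat.card (Z → F) = q ^ (Fintype.card Z) := by
      rw [Nat.card_fun, Nat.card_eq_fintype_card, Nat.card_eq_fintype_card, hq]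
    have hq1 : 1 ≤ q := by
      rw [← hq]; exact Fintype.card_pos
    exact le_trans h1 (h2 ▸ Nat.pow_le_pow_right hq1 hZle)
end
end

section
/- Distance of the auxiliary code for permuted product codes: Let F_q be a finite field of characteristic p, set s = p and n = q−1, and let γ be a primitive element of F_q^* (so γ has multiplicative order n). Note gcd(s,n) = 1. Let α ∈ F_q, β ∈ F_q^*, and let r and d2 be integers with 1 ≤ r ≤ s and 1 ≤ d2 ≤ n. Then for every nonzero polynomial p ∈ F_q[X,Y] with deg_X p < r and deg_Y p < d2, the number of indices j ∈ {0,…,n−1} such that p(α + i, γ^{js+i}·β) = 0 for all i ∈ {0,…,r−1} is at most d2 − 1. Equivalently, every nonzero codeword of the corresponding bivariate linear operator code (with operators T_i(p) = p(X+i, γ^i Y) and evaluation points (α, γ^{js}β)) has at least n − d2 + 1 nonzero coordinates. -/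
open MvPolynomial

noncomputable section

/-!
Suppose `p` vanished on the points of more than `d2 - 1` indices `j`. For each `i < r` the
points `γ^{js+i}β` are pairwise distinct, because `γ^s` still has order `n` (as `gcd(s, n) = 1`).
So on each of the `r` distinct vertical lines `X = α + i` (distinct since `r ≤ char F`), the
restriction of `p`, of `Y`-degree `< d2`, has at least `d2` roots and vanishes identically.
Then `p` vanishes on a grid `{α + i} × B` with `r` columns and at least `d2` rows, so `p = 0`
by the grid case of the Combinatorial Nullstellensatz.
-/

open Finset

namespace MvPolynomial

variable {R : Type*} [CommRing R] [IsDomain R]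

theorem eval_eq_zero_of_degreeOf_one_lt_card (p : MvPolynomial (Fin 2) R) (x : R)
    {B : Finset R} (hB : degreeOf 1 p < #B) (h : ∀ y ∈ B, eval ![x, y] p = 0) (y : R) :
    eval ![x, y] p = 0 := by
  set P := Polynomial.map (eval ![x]) (finSuccEquiv R 1 (rename Fin.rev p))
  -- `finSuccEquiv` singles out the variable `0`, hence the swap `Fin.rev` of the two variables.
  have heval : ∀ z, eval ![x, z] p = P.eval z := by
    intro z
    have hpt : (Fin.cons z ![x] ∘ Fin.rev : Fin 2 → R) = ![x, z] := by
      funext k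
      fin_cases k <;> rfl
    rw [← eval_eq_eval_mv_eval', eval_rename, hpt]
  have hP : P = 0 := by
    refine Polynomial.eq_zero_of_natDegree_lt_card_of_eval_eq_zero' P B
      (fun z hz => heval z ▸ h z hz) ?_
    calc P.natDegree ≤ (finSuccEquiv R 1 (rename Fin.rev p)).natDegree :=
          Polynomial.natDegree_map_le
      _ = degreeOf 1 p := by
          rw [natDegree_finSuccEquiv, ← degreeOf_rename_of_injective Fin.rev_injective 1]
          rfl
      _ < #B := hB
  rw [heval, hP, Polynomial.eval_zero]

theorem eq_zero_of_eval_eq_zero_on_fibers {ι : Type*} [Fintype ι] (p : MvPolynomial (Fin 2) R)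
    {a : ι → R} (ha : Function.Injective a) (B : ι → Finset R)
    (hA : degreeOf 0 p < Fintype.card ι) (hB : ∀ i, degreeOf 1 p < #(B i))
    (h : ∀ i, ∀ y ∈ B i, eval ![a i, y] p = 0) : p = 0 := by
  classical
  obtain ⟨i₀⟩ : Nonempty ι := Fintype.card_pos_iff.mp (by omega)
  refine eq_zero_of_eval_zero_at_prod_finset p ![univ.image a, B i₀] ?_ ?_
  · intro k
    fin_cases k
    · simpa [card_image_of_injective _ ha] using hA
    · simpa using hB i₀
  · intro x hx
    obtain ⟨i, -, hi⟩ := mem_image.mp (hx 0)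
    have hx' : x = ![a i, x 1] := by
      funext k
      fin_cases k <;> simp [hi]
    rw [hx']
    exact eval_eq_zero_of_degreeOf_one_lt_card p _ (hB i) (h i) _

end MvPolynomial

theorem DegLT.degreeOf_lt {F : Type} [Field F] {t k : ℕ} {p : MvPolynomial (Fin 2) F}
    (h : DegLT F t k p) (hp : p ≠ 0) : degreeOf 0 p < t ∧ degreeOf 1 p < k := by
  obtain ⟨m, hm⟩ := support_nonempty.mpr hp
  exact ⟨(degreeOf_lt_iff (Nat.zero_lt_of_lt (h m hm).1)).mpr fun m hm => (h m hm).1,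
    (degreeOf_lt_iff (Nat.zero_lt_of_lt (h m hm).2)).mpr fun m hm => (h m hm).2⟩

theorem injective_pow_mul_add_mul {G₀ : Type*} [CommGroupWithZero G₀] {γ β : G₀} {n s : ℕ}
    (hord : orderOf γ = n) (hs : n.Coprime s) (hβ : β ≠ 0) (i : ℕ) :
    Function.Injective fun j : Fin n => γ ^ ((j : ℕ) * s + i) * β := by
  intro j j' hjj'
  have hγ : γ ≠ 0 := (orderOf_pos_iff.mp (hord ▸ j.pos)).isUnit.ne_zero
  have hords : orderOf (γ ^ s) = n := hord ▸ (hord ▸ hs).orderOf_pow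
  simp only [pow_add, pow_mul', mul_assoc] at hjj'
  exact Fin.ext <| pow_injOn_Iio_orderOf (hords ▸ j.isLt) (hords ▸ j'.isLt)
    (mul_right_cancel₀ (mul_ne_zero (pow_ne_zero i hγ) hβ) hjj')

theorem FiniteField.coprime_card_sub_one_of_charP (F : Type*) [Field F] [Fintype F] (p : ℕ)
    [CharP F p] : (Fintype.card F - 1).Coprime p := by
  have hdvd : p ∣ Fintype.card F :=
    (CharP.cast_eq_zero_iff F p _).mp (FiniteField.cast_card_eq_zero F)
  exact ((Nat.coprime_self_sub_right Fintype.card_pos).mpr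
    (Nat.coprime_one_right _)).symm.coprime_dvd_right hdvd

theorem ppc_auxiliary_code_distance_general
    {F : Type} [Field F] [Fintype F] {q pc n r d2 : ℕ}
    (hq : Fintype.card F = q)
    (hchar : CharP F pc)
    (hn : n = q - 1)
    (γ : F) (hord : orderOf γ = n)
    (α β : F) (hβ : β ≠ 0)
    (hrs : r ≤ pc) :
    ∀ p : MvPolynomial (Fin 2) F, p ≠ 0 → DegLT F r d2 p →
      {j : Fin n |
        ∀ i : Fin r,
          eval ![α + ((i : ℕ) : F), γ ^ ((j : ℕ) * pc + (i : ℕ)) * β] p = 0}.ncard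
        ≤ d2 - 1 := by
  intro p hp hdeg
  classical
  obtain ⟨hX, hY⟩ := hdeg.degreeOf_lt hp
  rw [Set.ncard_eq_toFinset_card', Set.toFinset_ofPred]
  set J := univ.filter fun j : Fin n =>
    ∀ i : Fin r, eval ![α + ((i : ℕ) : F), γ ^ ((j : ℕ) * pc + (i : ℕ)) * β] p = 0
  by_contra! hJ
  have hcop : n.Coprime pc := hn ▸ hq ▸ FiniteField.coprime_card_sub_one_of_charP F pc
  have hα : Function.Injective fun i : Fin r => α + ((i : ℕ) : F) := fun i i' h =>
    Fin.ext <| CharP.natCast_injOn_Iio F pc (i.isLt.trans_le hrs) (i'.isLt.trans_le hrs)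
      (add_left_cancel h)
  let B : Fin r → Finset F := fun i =>
    J.image fun j : Fin n => γ ^ ((j : ℕ) * pc + (i : ℕ)) * β
  refine hp (eq_zero_of_eval_eq_zero_on_fibers p hα B (by simpa using hX) ?_ ?_)
  · intro i
    rw [card_image_of_injective _ (injective_pow_mul_add_mul hord hcop hβ i)]
    omega
  · intro i y hy
    obtain ⟨j, hj, rfl⟩ := mem_image.mp hy
    exact (mem_filter.mp hj).2 i

/-- Distance of the auxiliary code for permuted product codes: over `F_q` of
characteristic `p`, with `s = p`, `n = q - 1`, `γ` primitive, every nonzero `p` with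
`deg_X p < r`, `deg_Y p < d2` vanishes on all of `(α + i, γ^{js+i}·β)`, `i < r`, for
at most `d2 - 1` indices `j < n`; equivalently, every nonzero codeword of the
corresponding bivariate linear operator code (operators `T_i(p) = p(X+i, γ^i Y)`,
evaluation points `(α, γ^{js}·β)`) has at least `n - d2 + 1` nonzero coordinates. -/
theorem ppc_auxiliary_code_distance
    {F : Type} [Field F] [Fintype F] {q pc n r d2 : ℕ}
    (hq : Fintype.card F = q)
    (hchar : CharP F pc) (hpp : pc.Prime)
    (hn : n = q - 1)
    (γ : F) (hord : orderOf γ = n)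
    (α β : F) (hβ : β ≠ 0)
    (hr1 : 1 ≤ r) (hrs : r ≤ pc) (hd21 : 1 ≤ d2) (hd2n : d2 ≤ n) :
    ∀ p : MvPolynomial (Fin 2) F, p ≠ 0 → DegLT F r d2 p →
      {j : Fin n |
        ∀ i : Fin r,
          eval ![α + ((i : ℕ) : F), γ ^ ((j : ℕ) * pc + (i : ℕ)) * β] p = 0}.ncard
        ≤ d2 - 1 :=
  ppc_auxiliary_code_distance_general hq hchar hn γ hord α β hβ hrs

end
end

section
/- Permuted product codes are list decodable (concrete form of the Section 7 result): Let F_q be a finite field of characteristic p, set s = p and n = q−1, and let γ be a primitive element of F_q^*. Let ℓ1(X) = X + 1 and ℓ2(Y) = γY, α ∈ F_q, β ∈ F_q^*. Let 1 ≤ w ≤ s, r = s − w + 1, and let t, k, d2 be integers with t ≤ r, k ≤ d2 ≤ n, and w·(r−t+1)·(d2−k+1) > n·r. Then for every received word c ∈ (F_q^s)^n, the number of polynomials p ∈ F_q[X,Y] with deg_X p < t and deg_Y p < k whose permuted product code encoding differs from c in fewer than n − d2 + 1 of the n coordinates is at most q^{(w−1)·t}. -/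
open MvPolynomial

noncomputable section

/-- The `i`-th coordinate (a vector in `F^s`, `s = pc`) of the permuted product code
encoding of `p`, for `ℓ1(X) = X + 1` and `ℓ2(Y) = γ·Y`:
`(p(ℓ1^{is+j}(α), ℓ2^{is+j}(β)))_{j < s} = (p(α + (is+j), γ^{is+j}·β))_{j < s}`. -/
def ppcEnc (F : Type) [Field F] (pc : ℕ) (γ α β : F)
    (p : MvPolynomial (Fin 2) F) (i : ℕ) : Fin pc → F :=
  fun j => eval ![α + ((i * pc + (j : ℕ) : ℕ) : F), γ ^ (i * pc + (j : ℕ)) * β] p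

namespace PPC

open Polynomial Finset

variable {F : Type} [Field F]


def fm (a b : ℕ) : Fin 2 →₀ ℕ := Finsupp.single 0 a + Finsupp.single 1 b

lemma fm_apply0 (a b : ℕ) : fm a b 0 = a := by simp [fm, Finsupp.single_apply]
lemma fm_apply1 (a b : ℕ) : fm a b 1 = b := by simp [fm, Finsupp.single_apply]

lemma fm_eta (m : Fin 2 →₀ ℕ) : fm (m 0) (m 1) = m := by
  ext i; fin_cases i
  · exact fm_apply0 _ _
  · exact fm_apply1 _ _

def cf (p : MvPolynomial (Fin 2) F) (a b : ℕ) : F := MvPolynomial.coeff (fm a b) p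

lemma cf_zero_of {t k : ℕ} {p : MvPolynomial (Fin 2) F} (h : DegLT F t k p)
    {a b : ℕ} (hab : t ≤ a ∨ k ≤ b) : cf p a b = 0 := by
  by_contra hne
  have hmem : fm a b ∈ p.support := MvPolynomial.mem_support_iff.2 hne
  obtain ⟨h0, h1⟩ := h _ hmem
  rw [fm_apply0] at h0; rw [fm_apply1] at h1
  rcases hab with hab | hab <;> omega

lemma eq_of_cf {p₁ p₂ : MvPolynomial (Fin 2) F}
    (h : ∀ a b, cf p₁ a b = cf p₂ a b) : p₁ = p₂ := by
  apply MvPolynomial.ext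
  intro m
  have := h (m 0) (m 1)
  rwa [cf, cf, fm_eta] at this

lemma eval_grid {t k : ℕ} {p : MvPolynomial (Fin 2) F} (h : DegLT F t k p) (x y : F) :
    ∑ a ∈ range t, ∑ b ∈ range k, cf p a b * x ^ a * y ^ b
      = MvPolynomial.eval ![x, y] p := by
  classical
  rw [MvPolynomial.eval_eq']
  rw [← Finset.sum_product']
  have himg : ((range t) ×ˢ (range k)).image (fun ab => fm ab.1 ab.2) ⊇ p.support := by
    intro m hm
    obtain ⟨h0, h1⟩ := h m hm
    exact Finset.mem_image.2 ⟨(m 0, m 1), Finset.mem_product.2 ⟨Finset.mem_range.2 h0,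
      Finset.mem_range.2 h1⟩, fm_eta m⟩
  have hinj : ∀ ab ∈ (range t) ×ˢ (range k), ∀ ab' ∈ (range t) ×ˢ (range k),
      fm ab.1 ab.2 = fm ab'.1 ab'.2 → ab = ab' := by
    intro ab _ ab' _ hfm
    have h0 := congrArg (fun f => f 0) hfm
    have h1 := congrArg (fun f => f 1) hfm
    simp only [fm_apply0, fm_apply1] at h0 h1
    exact Prod.ext h0 h1
  rw [show (∑ ab ∈ (range t) ×ˢ (range k), cf p ab.1 ab.2 * x ^ ab.1 * y ^ ab.2)
      = ∑ m ∈ ((range t) ×ˢ (range k)).image (fun ab => fm ab.1 ab.2),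
          MvPolynomial.coeff m p * (x ^ (m 0) * y ^ (m 1)) from ?_]
  · refine (Finset.sum_subset himg ?_).symm |>.trans ?_
    · intro m _ hm
      rw [MvPolynomial.notMem_support_iff.1 hm, zero_mul]
    · apply Finset.sum_congr rfl
      intro m _
      rw [Fin.prod_univ_two]
      simp [mul_assoc]
  · rw [Finset.sum_image hinj]
    apply Finset.sum_congr rfl
    intro ab _
    rw [fm_apply0, fm_apply1, cf, mul_assoc]



def ΦF (γ : F) (t k : ℕ) (e : ℕ → ℕ → F) (u : ℕ) : Polynomial (Polynomial F) :=
  ∑ a ∈ range t, ∑ b ∈ range k,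
    Polynomial.C (Polynomial.C ((γ ^ u) ^ b * e a b)) *
      ((Polynomial.X + Polynomial.C (Polynomial.C ((u : ℕ) : F))) ^ a *
        Polynomial.C (Polynomial.X ^ b))

lemma ΦF_eval (γ : F) (t k : ℕ) (e : ℕ → ℕ → F) (u : ℕ) (x y : F) :
    Polynomial.eval y (Polynomial.eval (Polynomial.C x) (ΦF γ t k e u))
      = ∑ a ∈ range t, ∑ b ∈ range k, e a b * (x + (u : F)) ^ a * (γ ^ u * y) ^ b := by
  unfold ΦF
  simp only [Polynomial.eval_finset_sum, Polynomial.eval_mul, Polynomial.eval_pow,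
    Polynomial.eval_add, Polynomial.eval_C, Polynomial.eval_X, mul_pow]
  refine Finset.sum_congr rfl fun a _ => Finset.sum_congr rfl fun b _ => ?_
  ring

lemma ΦF_sub (γ : F) (t k : ℕ) (e₁ e₂ : ℕ → ℕ → F) (u : ℕ) :
    ΦF γ t k (fun a b => e₁ a b - e₂ a b) u = ΦF γ t k e₁ u - ΦF γ t k e₂ u := by
  unfold ΦF
  rw [← Finset.sum_sub_distrib]
  refine Finset.sum_congr rfl fun a _ => ?_
  rw [← Finset.sum_sub_distrib]
  refine Finset.sum_congr rfl fun b _ => ?_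
  rw [mul_sub, map_sub, map_sub, sub_mul]

lemma ΦF_coeff (γ : F) (t k : ℕ) (e : ℕ → ℕ → F) (u : ℕ) (d : ℕ) :
    (ΦF γ t k e u).coeff d
      = ∑ a ∈ range t, ∑ b ∈ range k,
          Polynomial.C ((γ ^ u) ^ b * e a b * (((u : ℕ) : F) ^ (a - d) * (a.choose d : F))) *
            Polynomial.X ^ b := by
  unfold ΦF
  simp only [Polynomial.finset_sum_coeff]
  refine Finset.sum_congr rfl fun a _ => Finset.sum_congr rfl fun b _ => ?_
  rw [Polynomial.coeff_C_mul, Polynomial.coeff_mul_C, Polynomial.coeff_X_add_C_pow]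
  simp only [map_mul, map_pow, Polynomial.C_eq_natCast]
  ring

lemma ΦF_coeff_coeff (γ : F) (t k : ℕ) (e : ℕ → ℕ → F) (u : ℕ) (d y : ℕ) :
    ((ΦF γ t k e u).coeff d).coeff y
      = if y < k then
          ∑ a ∈ range t, (γ ^ u) ^ y * e a y * (((u : ℕ) : F) ^ (a - d) * (a.choose d : F))
        else 0 := by
  rw [ΦF_coeff]
  simp only [Polynomial.finset_sum_coeff, Polynomial.coeff_C_mul, Polynomial.coeff_X_pow,
    mul_ite, mul_one, mul_zero]
  by_cases hyk : y < k
  · simp only [hyk, if_true]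
    refine Finset.sum_congr rfl fun a _ => ?_
    rw [Finset.sum_ite_eq (range k) y]
    simp [hyk]
  · simp only [hyk, if_false]
    refine Finset.sum_eq_zero fun a _ => ?_
    rw [Finset.sum_ite_eq (range k) y]
    simp [hyk]

lemma ΦF_coeff_zero_of_ge (γ : F) (t k : ℕ) (e : ℕ → ℕ → F) (u : ℕ) {d : ℕ} (hd : t ≤ d) :
    (ΦF γ t k e u).coeff d = 0 := by
  rw [ΦF_coeff]
  refine Finset.sum_eq_zero fun a ha => Finset.sum_eq_zero fun b _ => ?_
  rw [Nat.choose_eq_zero_of_lt (by exact lt_of_lt_of_le (Finset.mem_range.1 ha) hd)]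
  simp

lemma ΦF_coeff_zero_of_high (γ : F) (t k : ℕ) (e : ℕ → ℕ → F) (u : ℕ) {a0 d : ℕ}
    (hA : ∀ a b, a0 < a → e a b = 0) (hd : a0 < d) :
    (ΦF γ t k e u).coeff d = 0 := by
  rw [ΦF_coeff]
  refine Finset.sum_eq_zero fun a _ => Finset.sum_eq_zero fun b _ => ?_
  by_cases hcase : a < d
  · rw [Nat.choose_eq_zero_of_lt hcase]; simp
  · rw [hA a b (by omega)]; simp

def EF (γ : F) (t k : ℕ) {w : ℕ} (A : Fin w → Polynomial (Polynomial F))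
    (e : ℕ → ℕ → F) : Polynomial (Polynomial F) :=
  ∑ u : Fin w, A u * ΦF γ t k e (u : ℕ)

lemma extract (γ : F) (t k : ℕ) {w : ℕ} (A : Fin w → Polynomial (Polynomial F))
    (D e0 : ℕ)
    (hD : ∀ u d, D < d → (A u).coeff d = 0)
    (he0 : ∀ u y, e0 < y → ((A u).coeff D).coeff y = 0)
    (e : ℕ → ℕ → F) (a0 b0 : ℕ) (hb0 : b0 < k)
    (hA : ∀ a b, a0 < a → e a b = 0)
    (hB : ∀ b, b0 < b → e a0 b = 0)
    (hout0 : ∀ b, t ≤ a0 → e a0 b = 0) :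
    ((EF γ t k A e).coeff (D + a0)).coeff (e0 + b0)
      = (∑ u : Fin w, ((A u).coeff D).coeff e0 * (γ ^ b0) ^ (u : ℕ)) * e a0 b0 := by
  unfold EF
  simp only [Polynomial.finset_sum_coeff]
  rw [Finset.sum_mul]
  refine Finset.sum_congr rfl fun u _ => ?_
  -- outer coefficient
  have houter : (A u * ΦF γ t k e (u : ℕ)).coeff (D + a0)
      = (A u).coeff D * (ΦF γ t k e (u : ℕ)).coeff a0 := by
    rw [Polynomial.coeff_mul]
    refine Finset.sum_eq_single_of_mem (D, a0) (by simp [Finset.mem_antidiagonal]) ?_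
    rintro ⟨d, x'⟩ hmem hne
    rw [Finset.HasAntidiagonal.mem_antidiagonal] at hmem
    by_cases hdD : D < d
    · rw [hD u d hdD, zero_mul]
    · have hx' : a0 < x' := by
        rcases Nat.lt_or_ge d D with h | h
        · omega
        · exfalso; exact hne (by have : d = D := by omega
                                 subst this
                                 have : x' = a0 := by omega
                                 subst this; rfl)
      rw [ΦF_coeff_zero_of_high γ t k e _ hA hx', mul_zero]
  rw [houter, Polynomial.coeff_mul]
  refine (Finset.sum_eq_single_of_mem (e0, b0) (by simp [Finset.mem_antidiagonal]) ?_).trans ?_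
  · rintro ⟨y1, y2⟩ hmem hne
    rw [Finset.HasAntidiagonal.mem_antidiagonal] at hmem
    by_cases hy1 : e0 < y1
    · rw [he0 u y1 hy1, zero_mul]
    · have hy2 : b0 < y2 := by
        rcases Nat.lt_or_ge y1 e0 with h | h
        · omega
        · exfalso; exact hne (by have : y1 = e0 := by omega
                                 subst this
                                 have : y2 = b0 := by omega
                                 subst this; rfl)
      have : ((ΦF γ t k e (u : ℕ)).coeff a0).coeff y2 = 0 := by
        rw [ΦF_coeff_coeff]
        by_cases hy2k : y2 < k
        · simp only [hy2k, if_true]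
          refine Finset.sum_eq_zero fun a _ => ?_
          by_cases hcase : a < a0
          · rw [Nat.choose_eq_zero_of_lt hcase]; simp
          · by_cases hcase2 : a0 < a
            · rw [hA a y2 hcase2]; simp
            · have : a = a0 := by omega
              subst this
              rw [hB y2 hy2]; simp
        · simp [hy2k]
      rw [this, mul_zero]
  · -- main term
    have hmain : ((ΦF γ t k e (u : ℕ)).coeff a0).coeff b0 = (γ ^ b0) ^ (u : ℕ) * e a0 b0 := by
      rw [ΦF_coeff_coeff]
      simp only [hb0, if_true]
      refine (Finset.sum_eq_single a0 ?_ ?_).trans ?_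
      · intro a _ hne
        by_cases hcase : a < a0
        · rw [Nat.choose_eq_zero_of_lt hcase]; simp
        · rw [hA a b0 (by omega)]; simp
      · intro h
        rw [hout0 b0 (by simpa using h)]
        ring
      · rw [Nat.sub_self, Nat.choose_self, pow_zero, Nat.cast_one, one_mul, mul_one,
          ← pow_mul, ← pow_mul, mul_comm (u:ℕ) b0]
    rw [hmain]
    ring

lemma allzero (γ : F) (t k : ℕ) {w : ℕ} (A : Fin w → Polynomial (Polynomial F))
    (D e0 : ℕ)
    (hD : ∀ u d, D < d → (A u).coeff d = 0)
    (he0 : ∀ u y, e0 < y → ((A u).coeff D).coeff y = 0)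
    (e : ℕ → ℕ → F)
    (hout : ∀ a b, t ≤ a ∨ k ≤ b → e a b = 0)
    (hbad : ∀ a b, b < k →
      (∑ u : Fin w, ((A u).coeff D).coeff e0 * (γ ^ b) ^ (u : ℕ)) = 0 → e a b = 0)
    (hE : EF γ t k A e = 0) :
    ∀ a b, e a b = 0 := by
  suffices H : ∀ i a, t ≤ a + i → ∀ b, e a b = 0 by
    intro a b; exact H t a (by omega) b
  intro i
  induction i with
  | zero => intro a ha b; exact hout a b (Or.inl (by omega))
  | succ i ih =>
    intro a ha b
    by_cases hti : t ≤ a + i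
    · exact ih a hti b
    have hA' : ∀ a' b', a < a' → e a' b' = 0 := fun a' b' h => ih a' (by omega) b'
    suffices H2 : ∀ j b, k ≤ b + j → e a b = 0 by exact H2 k b (by omega)
    intro j
    induction j with
    | zero => intro b hb; exact hout a b (Or.inr (by omega))
    | succ j ihj =>
      intro b hb
      by_cases hkj : k ≤ b + j
      · exact ihj b hkj
      have hB' : ∀ b', b < b' → e a b' = 0 := fun b' h => ihj b' (by omega)
      have hbk : b < k := by omega
      have hout0 : ∀ b', t ≤ a → e a b' = 0 := fun b' h => hout a b' (Or.inl h)
      have hx := extract γ t k A D e0 hD he0 e a b hbk hA' hB' hout0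
      rw [hE] at hx
      simp only [Polynomial.coeff_zero] at hx
      rcases mul_eq_zero.1 hx.symm with hg | he
      · exact hbad a b hbk hg
      · exact he

lemma poly2_zero (P : Polynomial (Polynomial F)) (r' d2' : ℕ)
    (hX : ∀ d, r' ≤ d → P.coeff d = 0)
    (hY : ∀ d y, d2' ≤ y → (P.coeff d).coeff y = 0)
    (xs : Fin r' → F) (hxinj : Function.Injective xs)
    (ys : Fin r' → Finset F) (hycard : ∀ j, d2' ≤ (ys j).card)
    (hvan : ∀ j, ∀ y ∈ ys j,
      Polynomial.eval y (Polynomial.eval (Polynomial.C (xs j)) P) = 0) :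
    P = 0 := by
  have hHcoeff : ∀ (x : F) (y : ℕ), d2' ≤ y →
      (Polynomial.eval (Polynomial.C x) P).coeff y = 0 := by
    intro x y hy
    rw [Polynomial.eval_eq_sum_range, Polynomial.finset_sum_coeff]
    refine Finset.sum_eq_zero fun i _ => ?_
    rw [← Polynomial.C_pow, Polynomial.coeff_mul_C, hY i y hy, zero_mul]
  have hH0 : ∀ j, Polynomial.eval (Polynomial.C (xs j)) P = 0 := by
    intro j
    set H := Polynomial.eval (Polynomial.C (xs j)) P with hH
    by_cases h0 : H = 0
    · exact h0
    have hdeg : H.natDegree < d2' := by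
      by_contra hge
      push_neg at hge
      exact h0 (Polynomial.leadingCoeff_eq_zero.1 (hHcoeff _ _ hge))
    exact Polynomial.eq_zero_of_natDegree_lt_card_of_eval_eq_zero' H (ys j) (hvan j)
      (lt_of_lt_of_le hdeg (hycard j))
  by_cases h0 : P = 0
  · exact h0
  have hdeg : P.natDegree < r' := by
    by_contra hge
    push_neg at hge
    exact h0 (Polynomial.leadingCoeff_eq_zero.1 (hX _ hge))
  refine Polynomial.eq_zero_of_natDegree_lt_card_of_eval_eq_zero P
    (f := fun j : Fin r' => (Polynomial.C (xs j) : Polynomial F)) ?_ hH0 ?_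
  · exact fun j1 j2 h => hxinj (Polynomial.C_injective h)
  · simpa using hdeg


end PPC

/-- Permuted product codes are list decodable (concrete form of the Section 7
result): with `s = p = char F_q`, `n = q - 1`, `γ` primitive, `1 ≤ w ≤ s`,
`r = s - w + 1`, `t ≤ r`, `k ≤ d2 ≤ n` and `w(r-t+1)(d2-k+1) > nr`, for every
received word `c` there are at most `q^{(w-1)t}` message polynomials whose
encoding disagrees with `c` in fewer than `n - d2 + 1` coordinates. -/
theorem ppc_list_decodable
    {F : Type} [Field F] [Fintype F] {q pc n w r t k d2 : ℕ}
    (hq : Fintype.card F = q)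
    (hchar : CharP F pc) (hpp : pc.Prime)
    (hn : n = q - 1)
    (γ : F) (hord : orderOf γ = n)
    (α β : F) (hβ : β ≠ 0)
    (hw1 : 1 ≤ w) (hws : w ≤ pc) (hr : r = pc - w + 1)
    (ht : t ≤ r) (hk : k ≤ d2) (hd2 : d2 ≤ n)
    (hcount : n * r < w * (r - t + 1) * (d2 - k + 1))
    (c : Fin n → Fin pc → F) :
    {p : MvPolynomial (Fin 2) F | DegLT F t k p ∧
      {i : Fin n | ppcEnc F pc γ α β p (i : ℕ) ≠ c i}.ncard < n - d2 + 1}.Finite ∧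
    {p : MvPolynomial (Fin 2) F | DegLT F t k p ∧
      {i : Fin n | ppcEnc F pc γ α β p (i : ℕ) ≠ c i}.ncard < n - d2 + 1}.ncard
      ≤ q ^ ((w - 1) * t) := by
  classical
  have hq2 : 2 ≤ q := hq ▸ Fintype.one_lt_card
  set S := {p : MvPolynomial (Fin 2) F | DegLT F t k p ∧
      {i : Fin n | ppcEnc F pc γ α β p (i : ℕ) ≠ c i}.ncard < n - d2 + 1} with hSdef
  by_cases htriv : t = 0 ∨ k = 0
  · have hsub : S ⊆ {0} := by
      intro p hp
      simp only [Set.mem_singleton_iff]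
      by_contra hne
      obtain ⟨m, hm⟩ := MvPolynomial.support_nonempty.2 hne
      obtain ⟨h0, h1⟩ := hp.1 m hm
      rcases htriv with h | h <;> omega
    refine ⟨(Set.finite_singleton 0).subset hsub, ?_⟩
    calc S.ncard ≤ ({0} : Set (MvPolynomial (Fin 2) F)).ncard :=
          Set.ncard_le_ncard hsub (Set.finite_singleton 0)
      _ = 1 := Set.ncard_singleton 0
      _ ≤ q ^ ((w - 1) * t) := Nat.one_le_pow _ _ (by omega)
  push_neg at htriv
  have ht0 : 0 < t := Nat.pos_of_ne_zero htriv.1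
  have hk0 : 0 < k := Nat.pos_of_ne_zero htriv.2
  have hn1 : 1 ≤ n := by omega
  have hd21 : 1 ≤ d2 := by omega
  have hrw : r + w = pc + 1 := by omega
  have hr1 : 1 ≤ r := by omega
  have hγ0 : γ ≠ 0 := by
    intro h
    have h1 := pow_orderOf_eq_one γ
    rw [hord, h, zero_pow (by omega)] at h1
    exact zero_ne_one h1
  have hpcq : pc ∣ q := by
    obtain ⟨m, _, hcard⟩ := FiniteField.card F pc
    rw [hq] at hcard
    exact hcard ▸ dvd_pow_self pc (by exact_mod_cast m.ne_zero)
  have hcop : Nat.Coprime pc n := by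
    refine (Nat.Prime.coprime_iff_not_dvd hpp).2 ?_
    intro hdvd
    have h1 : pc ∣ q - n := Nat.dvd_sub hpcq hdvd
    have h2 : q - n = 1 := by omega
    rw [h2, Nat.dvd_one] at h1
    exact hpp.one_lt.ne' h1
  have hju : ∀ (j : Fin r) (u : Fin w), (j : ℕ) + (u : ℕ) < pc := by
    intro j u
    have hj := j.isLt
    have hu := u.isLt
    omega
  -- injectivity of the X-points
  have hxinj : Function.Injective (fun j : Fin r => α + ((j : ℕ) : F)) := by
    intro j1 j2 hj
    replace hj : ((j1 : ℕ) : F) = ((j2 : ℕ) : F) := add_left_cancel hj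
    have hj1 := j1.isLt
    have hj2 := j2.isLt
    rcases le_total (j1 : ℕ) (j2 : ℕ) with h | h
    · have h1 : (((j2 : ℕ) - (j1 : ℕ) : ℕ) : F) = 0 := by rw [Nat.cast_sub h, hj, sub_self]
      rw [CharP.cast_eq_zero_iff F pc] at h1
      have h2 := Nat.eq_zero_of_dvd_of_lt h1 (by omega)
      exact Fin.ext (by omega)
    · have h1 : (((j1 : ℕ) - (j2 : ℕ) : ℕ) : F) = 0 := by rw [Nat.cast_sub h, hj, sub_self]
      rw [CharP.cast_eq_zero_iff F pc] at h1
      have h2 := Nat.eq_zero_of_dvd_of_lt h1 (by omega)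
      exact Fin.ext (by omega)
  -- injectivity of the Y-points
  have hpowinj : ∀ (i1 i2 : Fin n) (j : ℕ),
      γ ^ ((i1 : ℕ) * pc + j) = γ ^ ((i2 : ℕ) * pc + j) → i1 = i2 := by
    have key : ∀ (i1 i2 : Fin n) (j : ℕ), (i1 : ℕ) ≤ (i2 : ℕ) →
        γ ^ ((i1 : ℕ) * pc + j) = γ ^ ((i2 : ℕ) * pc + j) → i1 = i2 := by
      intro i1 i2 j hle h
      have hmul : (i1 : ℕ) * pc ≤ (i2 : ℕ) * pc := Nat.mul_le_mul_right pc hle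
      have hsplit : (i2 : ℕ) * pc + j = (((i2 : ℕ) - (i1 : ℕ)) * pc) + ((i1 : ℕ) * pc + j) := by
        rw [Nat.sub_mul]; omega
      have hne : γ ^ ((i1 : ℕ) * pc + j) ≠ 0 := pow_ne_zero _ hγ0
      have h1 : γ ^ (((i2 : ℕ) - (i1 : ℕ)) * pc) = 1 := by
        refine mul_right_cancel₀ hne ?_
        rw [one_mul, ← pow_add, ← hsplit]
        exact h.symm
      have h2 : orderOf γ ∣ ((i2 : ℕ) - (i1 : ℕ)) * pc := orderOf_dvd_of_pow_eq_one h1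
      rw [hord] at h2
      have h3 : n ∣ (i2 : ℕ) - (i1 : ℕ) :=
        (Nat.Coprime.dvd_of_dvd_mul_right (Nat.Coprime.symm hcop) h2)
      have hi1 := i1.isLt
      have hi2 := i2.isLt
      have h4 := Nat.eq_zero_of_dvd_of_lt h3 (by omega)
      exact Fin.ext (by omega)
    intro i1 i2 j h
    rcases le_total (i1 : ℕ) (i2 : ℕ) with hle | hle
    · exact key i1 i2 j hle h
    · exact (key i2 i1 j hle h.symm).symm
  -- interpolation: a nonzero low-degree solution of the linear constraints
  obtain ⟨v, hvne, hv⟩ : ∃ v : (Fin w × Fin (r - t + 1) × Fin (d2 - k + 1)) → F, v ≠ 0 ∧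
      ∀ z : Fin n × Fin r,
        ∑ m : Fin w × Fin (r - t + 1) × Fin (d2 - k + 1),
          ((α + ((z.2 : ℕ) : F)) ^ (m.2.1 : ℕ) *
           (γ ^ ((z.1 : ℕ) * pc + (z.2 : ℕ)) * β) ^ (m.2.2 : ℕ) *
           c z.1 ⟨(z.2 : ℕ) + (m.1 : ℕ), hju z.2 m.1⟩) * v m = 0 := by
    by_contra hcon
    push_neg at hcon
    set L : ((Fin w × Fin (r - t + 1) × Fin (d2 - k + 1)) → F) →ₗ[F] ((Fin n × Fin r) → F) :=
      LinearMap.pi (fun z => ∑ m : Fin w × Fin (r - t + 1) × Fin (d2 - k + 1),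
        ((α + ((z.2 : ℕ) : F)) ^ (m.2.1 : ℕ) *
         (γ ^ ((z.1 : ℕ) * pc + (z.2 : ℕ)) * β) ^ (m.2.2 : ℕ) *
         c z.1 ⟨(z.2 : ℕ) + (m.1 : ℕ), hju z.2 m.1⟩) • LinearMap.proj m) with hL
    have hinj : Function.Injective L := by
      rw [← LinearMap.ker_eq_bot, LinearMap.ker_eq_bot']
      intro v hv0
      by_contra hne
      obtain ⟨z, hz⟩ := hcon v hne
      apply hz
      have h1 := congrFun hv0 z
      simpa [hL, LinearMap.pi_apply, LinearMap.sum_apply, LinearMap.smul_apply,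
        LinearMap.proj_apply, smul_eq_mul] using h1
    have hle := LinearMap.finrank_le_finrank_of_injective hinj
    rw [Module.finrank_fintype_fun_eq_card, Module.finrank_fintype_fun_eq_card] at hle
    simp only [Fintype.card_prod, Fintype.card_fin] at hle
    rw [mul_assoc] at hcount
    omega
  -- the interpolation polynomials
  set A : Fin w → Polynomial (Polynomial F) := fun u =>
    ∑ m : Fin (r - t + 1) × Fin (d2 - k + 1),
      Polynomial.monomial (m.1 : ℕ) (Polynomial.monomial (m.2 : ℕ) (v (u, m.1, m.2))) with hA
  have hAcc : ∀ (u : Fin w) (d y : ℕ), ((A u).coeff d).coeff y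
      = ∑ m : Fin (r - t + 1) × Fin (d2 - k + 1),
          (if (m.1 : ℕ) = d then (if (m.2 : ℕ) = y then v (u, m.1, m.2) else 0) else 0) := by
    intro u d y
    simp [hA, Polynomial.finset_sum_coeff, Polynomial.coeff_monomial,
      apply_ite (fun p : Polynomial F => p.coeff y)]
  have hAX : ∀ (u : Fin w) (d : ℕ), r - t + 1 ≤ d → (A u).coeff d = 0 := by
    intro u d hd
    rw [hA]
    simp only [Polynomial.finset_sum_coeff]
    refine Finset.sum_eq_zero fun m _ => ?_
    rw [Polynomial.coeff_monomial, if_neg (by have := m.1.isLt; omega)]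
  have hAY : ∀ (u : Fin w) (d y : ℕ), d2 - k + 1 ≤ y → ((A u).coeff d).coeff y = 0 := by
    intro u d y hy
    rw [hAcc]
    refine Finset.sum_eq_zero fun m _ => ?_
    have := m.2.isLt
    split_ifs with h1 h2
    · exact absurd h2 (by omega)
    · rfl
    · rfl
  have hAval : ∀ (u : Fin w) (m : Fin (r - t + 1) × Fin (d2 - k + 1)),
      ((A u).coeff (m.1 : ℕ)).coeff (m.2 : ℕ) = v (u, m.1, m.2) := by
    intro u m
    rw [hAcc]
    rw [Finset.sum_eq_single_of_mem m (Finset.mem_univ _)]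
    · simp
    · intro m' _ hne
      split_ifs with h1 h2
      · exact absurd (Prod.ext (Fin.ext h1) (Fin.ext h2)) hne
      · rfl
      · rfl
  have hAne : ∃ u, A u ≠ 0 := by
    rw [Function.ne_iff] at hvne
    obtain ⟨⟨u, m1, m2⟩, hm⟩ := hvne
    refine ⟨u, fun h0 => hm ?_⟩
    have h1 := hAval u (m1, m2)
    rw [h0] at h1
    simpa using h1.symm
  have hAeval : ∀ (u : Fin w) (x y : F),
      Polynomial.eval y (Polynomial.eval (Polynomial.C x) (A u))
        = ∑ m : Fin (r - t + 1) × Fin (d2 - k + 1),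
            v (u, m.1, m.2) * x ^ (m.1 : ℕ) * y ^ (m.2 : ℕ) := by
    intro u x y
    rw [hA]
    simp only [Polynomial.eval_finset_sum, Polynomial.eval_monomial, Polynomial.eval_mul,
      Polynomial.eval_pow, Polynomial.eval_C]
    refine Finset.sum_congr rfl fun m _ => ?_
    ring
  have hvanish : ∀ (i : Fin n) (j : Fin r),
      ∑ u : Fin w, Polynomial.eval (γ ^ ((i : ℕ) * pc + (j : ℕ)) * β)
          (Polynomial.eval (Polynomial.C (α + ((j : ℕ) : F))) (A u))
          * c i ⟨(j : ℕ) + (u : ℕ), hju j u⟩ = 0 := by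
    intro i j
    have h0 := hv (i, j)
    calc (∑ u : Fin w, Polynomial.eval (γ ^ ((i : ℕ) * pc + (j : ℕ)) * β)
          (Polynomial.eval (Polynomial.C (α + ((j : ℕ) : F))) (A u))
          * c i ⟨(j : ℕ) + (u : ℕ), hju j u⟩)
        = ∑ u : Fin w, ∑ m : Fin (r - t + 1) × Fin (d2 - k + 1),
            v (u, m.1, m.2) * (α + ((j : ℕ) : F)) ^ (m.1 : ℕ) *
              (γ ^ ((i : ℕ) * pc + (j : ℕ)) * β) ^ (m.2 : ℕ) *
              c i ⟨(j : ℕ) + (u : ℕ), hju j u⟩ := by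
          refine Finset.sum_congr rfl fun u _ => ?_
          rw [hAeval, Finset.sum_mul]
      _ = ∑ m : Fin w × Fin (r - t + 1) × Fin (d2 - k + 1),
            ((α + ((j : ℕ) : F)) ^ (m.2.1 : ℕ) *
             (γ ^ ((i : ℕ) * pc + (j : ℕ)) * β) ^ (m.2.2 : ℕ) *
             c i ⟨(j : ℕ) + (m.1 : ℕ), hju j m.1⟩) * v m := by
          rw [Fintype.sum_prod_type]
          refine Finset.sum_congr rfl fun u _ => Finset.sum_congr rfl fun m' _ => ?_
          simp only [Prod.mk.eta]
          ring
      _ = 0 := h0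
  -- every listed polynomial satisfies the functional equation
  have key : ∀ p ∈ S, PPC.EF γ t k A (PPC.cf p) = 0 := by
    intro p hp
    obtain ⟨hdeg, hdis⟩ := hp
    have hAgrcard : d2 ≤ (Finset.univ.filter fun i : Fin n =>
        ppcEnc F pc γ α β p (i : ℕ) = c i).card := by
      have h1 : {i : Fin n | ppcEnc F pc γ α β p (i : ℕ) ≠ c i}
          = ↑(Finset.univ.filter fun i : Fin n => ¬ (ppcEnc F pc γ α β p (i : ℕ) = c i)) := by
        ext i; simp
      rw [h1, Set.ncard_coe_finset] at hdis
      have h2 := Finset.card_filter_add_card_filter_not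
        (s := (Finset.univ : Finset (Fin n)))
        (p := fun i : Fin n => ppcEnc F pc γ α β p (i : ℕ) = c i)
      rw [Finset.card_univ, Fintype.card_fin] at h2
      omega
    refine PPC.poly2_zero (PPC.EF γ t k A (PPC.cf p)) r d2 ?_ ?_
      (fun j : Fin r => α + ((j : ℕ) : F)) hxinj
      (fun j : Fin r => (Finset.univ.filter fun i : Fin n =>
        ppcEnc F pc γ α β p (i : ℕ) = c i).image
          (fun i : Fin n => γ ^ ((i : ℕ) * pc + (j : ℕ)) * β)) ?_ ?_
    · intro d hd
      simp only [PPC.EF, Polynomial.finset_sum_coeff]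
      refine Finset.sum_eq_zero fun u _ => ?_
      rw [Polynomial.coeff_mul]
      refine Finset.sum_eq_zero fun z hz => ?_
      rw [Finset.HasAntidiagonal.mem_antidiagonal] at hz
      by_cases h1 : r - t + 1 ≤ z.1
      · rw [hAX u z.1 h1, zero_mul]
      · rw [PPC.ΦF_coeff_zero_of_ge γ t k (PPC.cf p) (u : ℕ) (show t ≤ z.2 by omega), mul_zero]
    · intro d y hy
      simp only [PPC.EF, Polynomial.finset_sum_coeff]
      refine Finset.sum_eq_zero fun u _ => ?_
      rw [Polynomial.coeff_mul, Polynomial.finset_sum_coeff]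
      refine Finset.sum_eq_zero fun z hz => ?_
      rw [Finset.HasAntidiagonal.mem_antidiagonal] at hz
      rw [Polynomial.coeff_mul]
      refine Finset.sum_eq_zero fun z2 hz2 => ?_
      rw [Finset.HasAntidiagonal.mem_antidiagonal] at hz2
      by_cases h1 : d2 - k + 1 ≤ z2.1
      · rw [hAY u z.1 z2.1 h1, zero_mul]
      · rw [PPC.ΦF_coeff_coeff, if_neg (by omega), mul_zero]
    · intro j
      rw [Finset.card_image_of_injOn]
      · exact hAgrcard
      · intro i1 _ i2 _ hii
        exact hpowinj i1 i2 (j : ℕ) (mul_right_cancel₀ hβ hii)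
    · intro j yv hyv
      obtain ⟨i, hiA, rfl⟩ := Finset.mem_image.1 hyv
      have hagree : ppcEnc F pc γ α β p (i : ℕ) = c i := (Finset.mem_filter.1 hiA).2
      simp only [PPC.EF, Polynomial.eval_finset_sum, Polynomial.eval_mul]
      refine Eq.trans (Finset.sum_congr rfl fun u _ => ?_) (hvanish i j)
      congr 1
      rw [PPC.ΦF_eval, PPC.eval_grid hdeg]
      have hx : α + ((j : ℕ) : F) + ((u : ℕ) : F)
          = α + ((((i : ℕ) * pc + ((j : ℕ) + (u : ℕ))) : ℕ) : F) := by
        push_cast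
        rw [CharP.cast_eq_zero F pc]
        ring
      have hy : γ ^ (u : ℕ) * (γ ^ ((i : ℕ) * pc + (j : ℕ)) * β)
          = γ ^ ((i : ℕ) * pc + ((j : ℕ) + (u : ℕ))) * β := by
        rw [← mul_assoc, ← pow_add]
        congr 2
        omega
      rw [hx, hy, ← hagree]
      rfl
  -- leading structure of A
  set D : ℕ := Finset.univ.sup (fun u : Fin w => (A u).natDegree) with hDdef
  have hDz : ∀ (u : Fin w) (d : ℕ), D < d → (A u).coeff d = 0 := by
    intro u d hd
    refine Polynomial.coeff_eq_zero_of_natDegree_lt (lt_of_le_of_lt ?_ hd)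
    rw [hDdef]
    exact Finset.le_sup (f := fun u : Fin w => (A u).natDegree) (Finset.mem_univ u)
  set e0 : ℕ := Finset.univ.sup (fun u : Fin w => ((A u).coeff D).natDegree) with he0def
  have he0z : ∀ (u : Fin w) (y : ℕ), e0 < y → ((A u).coeff D).coeff y = 0 := by
    intro u y hy
    refine Polynomial.coeff_eq_zero_of_natDegree_lt (lt_of_le_of_lt ?_ hy)
    rw [he0def]
    exact Finset.le_sup (f := fun u : Fin w => ((A u).coeff D).natDegree) (Finset.mem_univ u)
  have hgood : ∃ u : Fin w, ((A u).coeff D).coeff e0 ≠ 0 := by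
    obtain ⟨u1, hu1⟩ := hAne
    obtain ⟨u2, hu2mem, hu2max⟩ := Finset.exists_max_image
      (Finset.univ.filter fun u : Fin w => A u ≠ 0) (fun u => (A u).natDegree)
      ⟨u1, Finset.mem_filter.2 ⟨Finset.mem_univ _, hu1⟩⟩
    have hu2ne : A u2 ≠ 0 := (Finset.mem_filter.1 hu2mem).2
    have hDeq : (A u2).natDegree = D := by
      rw [hDdef]
      refine le_antisymm (Finset.le_sup (f := fun u : Fin w => (A u).natDegree)
        (Finset.mem_univ u2)) (Finset.sup_le fun u _ => ?_)
      by_cases h0 : A u = 0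
      · rw [h0, Polynomial.natDegree_zero]; exact Nat.zero_le _
      · exact hu2max u (Finset.mem_filter.2 ⟨Finset.mem_univ _, h0⟩)
    have hB2 : (A u2).coeff D ≠ 0 := by
      rw [← hDeq, Polynomial.coeff_natDegree]
      exact Polynomial.leadingCoeff_ne_zero.2 hu2ne
    obtain ⟨u3, hu3mem, hu3max⟩ := Finset.exists_max_image
      (Finset.univ.filter fun u : Fin w => (A u).coeff D ≠ 0)
      (fun u => ((A u).coeff D).natDegree)
      ⟨u2, Finset.mem_filter.2 ⟨Finset.mem_univ _, hB2⟩⟩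
    have hu3ne : (A u3).coeff D ≠ 0 := (Finset.mem_filter.1 hu3mem).2
    have he0eq : ((A u3).coeff D).natDegree = e0 := by
      rw [he0def]
      refine le_antisymm (Finset.le_sup (f := fun u : Fin w => ((A u).coeff D).natDegree)
        (Finset.mem_univ u3)) (Finset.sup_le fun u _ => ?_)
      by_cases h0 : (A u).coeff D = 0
      · rw [h0, Polynomial.natDegree_zero]; exact Nat.zero_le _
      · exact hu3max u (Finset.mem_filter.2 ⟨Finset.mem_univ _, h0⟩)
    refine ⟨u3, ?_⟩
    rw [← he0eq, Polynomial.coeff_natDegree]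
    exact Polynomial.leadingCoeff_ne_zero.2 hu3ne
  set g : Polynomial F :=
    ∑ u : Fin w, Polynomial.monomial (u : ℕ) (((A u).coeff D).coeff e0) with hgdef
  have hgeval : ∀ z : F, Polynomial.eval z g
      = ∑ u : Fin w, ((A u).coeff D).coeff e0 * z ^ (u : ℕ) := by
    intro z
    rw [hgdef, Polynomial.eval_finset_sum]
    simp [Polynomial.eval_monomial]
  have hgne : g ≠ 0 := by
    obtain ⟨u3, hu3⟩ := hgood
    intro h0
    apply hu3
    have hco : g.coeff (u3 : ℕ) = ((A u3).coeff D).coeff e0 := by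
      rw [hgdef, Polynomial.finset_sum_coeff]
      rw [Finset.sum_eq_single_of_mem u3 (Finset.mem_univ _)]
      · rw [Polynomial.coeff_monomial, if_pos rfl]
      · intro u _ hne
        rw [Polynomial.coeff_monomial, if_neg (fun hc => hne (Fin.ext hc))]
    rw [h0, Polynomial.coeff_zero] at hco
    exact hco.symm
  have hgdeg : g.natDegree ≤ w - 1 := by
    rw [hgdef]
    refine Polynomial.natDegree_sum_le_of_forall_le _ _ fun u _ => ?_
    refine le_trans (Polynomial.natDegree_monomial_le _) ?_
    have := u.isLt; omega
  set Bad : Finset ℕ := (Finset.range k).filter (fun b => Polynomial.eval (γ ^ b) g = 0)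
    with hBadDef
  have hBadcard : Bad.card ≤ w - 1 := by
    have hsub : ∀ b ∈ Bad, γ ^ b ∈ g.roots.toFinset := by
      intro b hb
      obtain ⟨hbk, hbe⟩ := Finset.mem_filter.1 hb
      rw [Multiset.mem_toFinset, Polynomial.mem_roots']
      exact ⟨hgne, hbe⟩
    have hinj : Set.InjOn (fun b => γ ^ b) Bad := by
      intro b1 h1 b2 h2 he
      have hb1 : b1 < n := by
        have := (Finset.mem_filter.1 h1).1; rw [Finset.mem_range] at this; omega
      have hb2 : b2 < n := by
        have := (Finset.mem_filter.1 h2).1; rw [Finset.mem_range] at this; omega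
      exact pow_injOn_Iio_orderOf (by rw [hord]; exact hb1) (by rw [hord]; exact hb2) he
    calc Bad.card ≤ g.roots.toFinset.card := Finset.card_le_card_of_injOn _ hsub hinj
      _ ≤ Multiset.card g.roots := Multiset.toFinset_card_le _
      _ ≤ g.natDegree := Polynomial.card_roots' g
      _ ≤ w - 1 := hgdeg
  -- the injection into a small function space
  have hinjOn : Set.InjOn (fun p => fun (a : Fin t) (jj : Fin (w - 1)) =>
      PPC.cf p (a : ℕ) (Bad.toList.getD (jj : ℕ) 0)) S := by
    intro p1 hp1 p2 hp2 hft
    have hcfeq : ∀ a b : ℕ, b ∈ Bad → PPC.cf p1 a b = PPC.cf p2 a b := by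
      intro a b hb
      by_cases hat : a < t
      · obtain ⟨jj, hjj, hget⟩ := List.mem_iff_getElem.1 (Finset.mem_toList.2 hb)
        have hlen := Finset.length_toList Bad
        have hjlt : jj < w - 1 := by omega
        have hthis := congrFun (congrFun hft ⟨a, hat⟩) ⟨jj, hjlt⟩
        have hgd : Bad.toList.getD (jj : ℕ) 0 = b := by
          rw [List.getD_eq_getElem _ _ (show jj < Bad.toList.length by omega)]
          exact hget
        have hthis' : PPC.cf p1 a (Bad.toList.getD jj 0) = PPC.cf p2 a (Bad.toList.getD jj 0) :=
          hthis
        rw [hgd] at hthis'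
        exact hthis'
      · rw [PPC.cf_zero_of hp1.1 (Or.inl (by omega)), PPC.cf_zero_of hp2.1 (Or.inl (by omega))]
    have hzero : ∀ a b : ℕ, PPC.cf p1 a b - PPC.cf p2 a b = 0 := by
      refine PPC.allzero γ t k A D e0 hDz he0z _ ?_ ?_ ?_
      · intro a b hab
        rw [PPC.cf_zero_of hp1.1 hab, PPC.cf_zero_of hp2.1 hab, sub_self]
      · intro a b hbk hsum
        have hmem : b ∈ Bad := Finset.mem_filter.2
          ⟨Finset.mem_range.2 hbk, by rw [hgeval]; exact hsum⟩
        rw [hcfeq a b hmem, sub_self]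
      · have hsplit : PPC.EF γ t k A (fun a b => PPC.cf p1 a b - PPC.cf p2 a b)
            = PPC.EF γ t k A (PPC.cf p1) - PPC.EF γ t k A (PPC.cf p2) := by
          simp only [PPC.EF]
          rw [← Finset.sum_sub_distrib]
          refine Finset.sum_congr rfl fun u _ => ?_
          rw [PPC.ΦF_sub, mul_sub]
        rw [hsplit, key p1 hp1, key p2 hp2, sub_zero]
    apply PPC.eq_of_cf
    intro a b
    exact sub_eq_zero.1 (hzero a b)
  have hfin : S.Finite := Set.Finite.of_finite_image (Set.toFinite _) hinjOn
  refine ⟨hfin, ?_⟩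
  calc S.ncard = ((fun p => fun (a : Fin t) (jj : Fin (w - 1)) =>
        PPC.cf p (a : ℕ) (Bad.toList.getD (jj : ℕ) 0)) '' S).ncard :=
        (Set.ncard_image_of_injOn hinjOn).symm
    _ ≤ (Set.univ : Set (Fin t → Fin (w - 1) → F)).ncard :=
        Set.ncard_le_ncard (Set.subset_univ _) Set.finite_univ
    _ = Fintype.card (Fin t → Fin (w - 1) → F) := by
        rw [Set.ncard_univ, Nat.card_eq_fintype_card]
    _ = q ^ ((w - 1) * t) := by
        simp only [Fintype.card_fun, Fintype.card_fin, hq]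
        rw [← pow_mul]
end
end
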